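/- arXiv:1705.05564 — 6 statements merged into one kernel-verified Lean document; each statement's English description precedes it below -/
import Mathlib

section
/- Let A be a finite or countable alphabet, θ a bijective literal (anti)morphism on A*, X a finite θ-invariant subset of A*, and Y the minimal generating set of the smallest θ-invariant free submonoid of A* containing X. If X is not a code, then |Y| ≤ |X| − 1. -/
open List

variable {α : Type*}

/-- The submonoid (as a set) generated by `X`: all concatenations of words of `X`. -/
def StarSet (X : Set (List α)) : Set (List α) :=
  {w | ∃ l : List (List α), (∀ u ∈ l, u ∈ X) ∧ l.flatten = w}

/-- `X` is a (variable-length) code: unique factorization over `X`. -/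
def IsCode (X : Set (List α)) : Prop :=
  ∀ l m : List (List α), (∀ u ∈ l, u ∈ X) → (∀ u ∈ m, u ∈ X) →
    l.flatten = m.flatten → l = m

def Factor (u w : List α) : Prop := ∃ p s, p ++ u ++ s = w

def Factors (S : Set (List α)) : Set (List α) := {u | ∃ w ∈ S, Factor u w}

def Complete (X : Set (List α)) : Prop := Factors (StarSet X) = Set.univ

def Thin (X : Set (List α)) : Prop := Factors X ≠ Set.univ

def Invariant (θ : List α → List α) (X : Set (List α)) : Prop := θ '' X = X

def IsSubmonoidSet (M : Set (List α)) : Prop :=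
  [] ∈ M ∧ ∀ u ∈ M, ∀ v ∈ M, u ++ v ∈ M

/-- Stability (equidivisibility) condition, characterizing free submonoids of `A*`. -/
def Stable (M : Set (List α)) : Prop :=
  ∀ u v w, u ∈ M → u ++ v ∈ M → w ∈ M → v ++ w ∈ M → v ∈ M

def FreeSubmonoid (M : Set (List α)) : Prop := IsSubmonoidSet M ∧ Stable M

/-- Minimal generating set of a submonoid: `(M \ {ε}) \ (M \ {ε})²`. -/
def MinGen (M : Set (List α)) : Set (List α) :=
  {w | w ∈ M ∧ w ≠ [] ∧
    ¬ ∃ u v, u ∈ M ∧ v ∈ M ∧ u ≠ [] ∧ v ≠ [] ∧ u ++ v = w}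

def IsMorphism (θ : List α → List α) : Prop :=
  ∀ u v, θ (u ++ v) = θ u ++ θ v

def IsAntimorphism (θ : List α → List α) : Prop :=
  θ [] = [] ∧ ∀ u v, θ (u ++ v) = θ v ++ θ u

/-- `θ` is literal: the image of a letter is a letter. -/
def Literal (θ : List α → List α) : Prop := ∀ a : α, ∃ b : α, θ [a] = [b]

/-- `θ` is a bijective literal (anti)morphism of the free monoid. -/
def LitAnti (θ : List α → List α) : Prop :=
  Function.Bijective θ ∧ Literal θ ∧ (IsMorphism θ ∨ IsAntimorphism θ)

/-- The set `{θ^i z : i ∈ ℤ}` for a bijective `θ` (negative powers are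
captured by `θ^[i] w = z`). -/
def OrbitZ (θ : List α → List α) (z : List α) : Set (List α) :=
  {w | ∃ i : ℕ, θ^[i] z = w ∨ θ^[i] w = z}

def IsPrefixCode (X : Set (List α)) : Prop :=
  [] ∉ X ∧ ∀ x ∈ X, ∀ u, x ++ u ∈ X → u = []

def IsSuffixCode (X : Set (List α)) : Prop :=
  [] ∉ X ∧ ∀ x ∈ X, ∀ u, u ++ x ∈ X → u = []

/-- `X^k`: products of exactly `k` words of `X`. -/
def PowSet (X : Set (List α)) (k : ℕ) : Set (List α) :=
  {w | ∃ l : List (List α), l.length = k ∧ (∀ u ∈ l, u ∈ X) ∧ l.flatten = w}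

/-- Circular code: `x₁⋯xₘ = s·y₂⋯yₙ·p` with `y₁ = ps ∈ X`, `s ≠ ε`
forces `m = n`, `p = ε` and `xᵢ = yᵢ`. -/
def IsCircularCode (X : Set (List α)) : Prop :=
  ∀ (l ys : List (List α)) (p s : List α),
    (∀ u ∈ l, u ∈ X) → p ++ s ∈ X → (∀ u ∈ ys, u ∈ X) → s ≠ [] →
    l.flatten = s ++ ys.flatten ++ p → l = (p ++ s) :: ys ∧ p = []

/-- A word is overlapping-free if no proper nonempty prefix equals a suffix. -/
def OverlapFree (w : List α) : Prop :=
  ¬ ∃ u v : List α, u ≠ [] ∧ u.length ≤ w.length - 1 ∧ u ++ w = w ++ v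

/-- `X` is a regular (rational) language: accepted by a finite automaton. -/
def IsRegularSet (X : Set (List α)) : Prop :=
  ∃ (σ : Type) (_ : Fintype σ) (M : DFA α σ), M.accepts = X


/-!
The free submonoids of `A*` are closed under intersection, so `X` has a free hull `N`. A bijective
(anti)morphism maps free submonoids to free submonoids in both directions, hence `θ(N) = N` and `N`
is also the smallest `θ`-invariant free submonoid containing `X`. This reduces the statement to the
defect theorem: every minimal generator `y` of `N` is the first factor of some `x ∈ X` (otherwise the
elements of `N` not starting with `y` would form a smaller free submonoid containing `X`), first
factors are unique by stability, and a nontrivial relation `x r = x' r'` between distinct `x, x'`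
forces `x` and `x'` to have the same first factor. So `x ↦ first factor of x` maps `X` onto the
minimal generating set of `N` without being injective.
-/

open Set

theorem List.exists_cons_suffix_ne_of_flatten_eq {l m : List (List α)} (hl : [] ∉ l)
    (hm : [] ∉ m) (h : l.flatten = m.flatten) (hne : l ≠ m) :
    ∃ x l' x' m', x ≠ x' ∧ x :: l' <:+ l ∧ x' :: m' <:+ m ∧ x ++ l'.flatten = x' ++ m'.flatten := by
  have eq_nil : ∀ {k : List (List α)}, [] ∉ k → k.flatten = [] → k = [] := fun hk h0 =>
    eq_nil_iff_forall_not_mem.mpr fun x hx => hk (flatten_eq_nil_iff.mp h0 x hx ▸ hx)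
  induction l generalizing m with
  | nil => exact absurd (eq_nil hm h.symm).symm hne
  | cons x l ih =>
    cases m with
    | nil => exact absurd (eq_nil hl h) hne
    | cons x' m =>
      by_cases hxx : x = x'
      · subst hxx
        obtain ⟨y, l', y', m', hyy, hl', hm', heq⟩ :=
          ih (fun h' => hl (mem_cons_of_mem x h')) (fun h' => hm (mem_cons_of_mem x h'))
            (by simpa using h) (fun h' => hne (h' ▸ rfl))
        exact ⟨y, l', y', m', hyy, hl'.trans (suffix_cons x l), hm'.trans (suffix_cons x m), heq⟩
      · exact ⟨x, l, x', m, hxx, suffix_refl _, suffix_refl _, by simpa using h⟩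

theorem IsSubmonoidSet.flatten_mem {M : Set (List α)} (hM : IsSubmonoidSet M) {l : List (List α)}
    (hl : ∀ u ∈ l, u ∈ M) : l.flatten ∈ M := by
  induction l with
  | nil => exact hM.1
  | cons x l ih => exact hM.2 x (hl x mem_cons_self) _ (ih fun u hu => hl u (mem_cons_of_mem x hu))

theorem IsMorphism.map_nil {θ : List α → List α} (h : IsMorphism θ) : θ [] = [] := by
  simpa using congrArg List.length (h [] [])

theorem isMorphism_or_isAntimorphism_of_inverse {θ τ : List α → List α}
    (hθ : IsMorphism θ ∨ IsAntimorphism θ) (hl : Function.LeftInverse τ θ)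
    (hr : Function.RightInverse τ θ) : IsMorphism τ ∨ IsAntimorphism τ := by
  rcases hθ with h | ⟨h0, h⟩
  · exact .inl fun u v => by rw [← hl (τ u ++ τ v), h, hr, hr]
  · exact .inr ⟨by simpa [h0] using hl [], fun u v => by rw [← hl (τ v ++ τ u), h, hr, hr]⟩

theorem FreeSubmonoid.preimage {θ : List α → List α} (hθ : IsMorphism θ ∨ IsAntimorphism θ)
    {M : Set (List α)} (hM : FreeSubmonoid M) : FreeSubmonoid (θ ⁻¹' M) := by
  obtain ⟨⟨hnil, hmul⟩, hst⟩ := hM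
  rcases hθ with h | ⟨h0, h⟩
  · refine ⟨⟨by simpa [h.map_nil] using hnil, fun u hu v hv => ?_⟩, fun u v w hu huv hw hvw => ?_⟩
    · simpa only [mem_preimage, h u v] using hmul _ hu _ hv
    · rw [mem_preimage, h] at huv hvw
      exact hst _ _ _ hu huv hw hvw
  · refine ⟨⟨by simpa [h0] using hnil, fun u hu v hv => ?_⟩, fun u v w hu huv hw hvw => ?_⟩
    · simpa only [mem_preimage, h u v] using hmul _ hv _ hu
    · rw [mem_preimage, h] at huv hvw
      exact hst _ _ _ hw hvw hu huv

def freeHull (X : Set (List α)) : Set (List α) := ⋂₀ {M | FreeSubmonoid M ∧ X ⊆ M}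

theorem freeHull_free (X : Set (List α)) : FreeSubmonoid (freeHull X) :=
  ⟨⟨fun _ hM => hM.1.1.1, fun _ hu _ hv M hM => hM.1.1.2 _ (hu M hM) _ (hv M hM)⟩,
    fun _ _ _ hu huv hw hvw M hM => hM.1.2 _ _ _ (hu M hM) (huv M hM) (hw M hM) (hvw M hM)⟩

theorem subset_freeHull (X : Set (List α)) : X ⊆ freeHull X :=
  fun _ hx _ hM => hM.2 hx

theorem freeHull_minimal {X M : Set (List α)} (hM : FreeSubmonoid M) (hXM : X ⊆ M) :
    freeHull X ⊆ M :=
  fun _ hw => hw M ⟨hM, hXM⟩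

theorem freeHull_subset_preimage {θ : List α → List α} (hθ : IsMorphism θ ∨ IsAntimorphism θ)
    {X : Set (List α)} (hX : MapsTo θ X X) : freeHull X ⊆ θ ⁻¹' freeHull X :=
  freeHull_minimal ((freeHull_free X).preimage hθ) fun _ hx => subset_freeHull X (hX hx)

theorem invariant_freeHull {θ : List α → List α} (hθ : LitAnti θ) {X : Set (List α)}
    (hX : Invariant θ X) : Invariant θ (freeHull X) := by
  obtain ⟨hbij, -, hmor⟩ := hθ
  obtain ⟨τ, hl, hr⟩ := Function.bijective_iff_has_inverse.mp hbij
  have hθX : MapsTo θ X X := fun x hx => hX ▸ mem_image_of_mem θ hx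
  have hτX : MapsTo τ X X := fun x hx => by
    rw [← hX] at hx
    obtain ⟨x', hx', rfl⟩ := hx
    rwa [hl]
  show θ '' freeHull X = freeHull X
  refine (image_subset_iff.mpr (freeHull_subset_preimage hmor hθX)).antisymm fun w hw => ?_
  exact ⟨τ w, freeHull_subset_preimage (isMorphism_or_isAntimorphism_of_inverse hmor hl hr) hτX hw,
    hr w⟩

theorem sInter_freeSubmonoid_invariant_eq_freeHull {θ : List α → List α} (hθ : LitAnti θ)
    {X : Set (List α)} (hX : Invariant θ X) :
    ⋂₀ {M | FreeSubmonoid M ∧ Invariant θ M ∧ X ⊆ M} = freeHull X := by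
  refine (sInter_subset_of_mem ?_).antisymm (subset_sInter fun _ hM => freeHull_minimal hM.1 hM.2.2)
  exact ⟨freeHull_free X, invariant_freeHull hθ hX, subset_freeHull X⟩

namespace FreeSubmonoid

variable {M : Set (List α)}

theorem exists_minGen_append (hM : FreeSubmonoid M) {w : List α} (hw : w ∈ M) (hne : w ≠ []) :
    ∃ y ∈ MinGen M, ∃ r ∈ M, y ++ r = w := by
  by_cases hmin : w ∈ MinGen M
  · exact ⟨w, hmin, [], hM.1.1, append_nil w⟩
  obtain ⟨u, v, hu, hv, hune, hvne, huv⟩ :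
      ∃ u v, u ∈ M ∧ v ∈ M ∧ u ≠ [] ∧ v ≠ [] ∧ u ++ v = w := by
    by_contra h
    exact hmin ⟨hw, hne, h⟩
  have : u.length < w.length := by
    simp [← huv, length_pos_iff.mpr hvne]
  obtain ⟨y, hy, r, hr, rfl⟩ := hM.exists_minGen_append hu hune
  exact ⟨y, hy, r ++ v, hM.1.2 r hr v hv, by rw [← huv, append_assoc]⟩
termination_by w.length

theorem eq_nil_of_minGen_append (hM : FreeSubmonoid M) {y t r : List α} (hy : y ∈ MinGen M)
    (hyt : y ++ t ∈ MinGen M) (htr : t ++ r ∈ M) (hr : r ∈ M) : t = [] := by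
  by_contra ht
  exact hyt.2.2 ⟨y, t, hy.1, hM.2 y t r hy.1 hyt.1 hr htr, hy.2.1, ht, rfl⟩

theorem minGen_append_inj (hM : FreeSubmonoid M) {y₁ y₂ r₁ r₂ : List α} (hy₁ : y₁ ∈ MinGen M)
    (hy₂ : y₂ ∈ MinGen M) (hr₁ : r₁ ∈ M) (hr₂ : r₂ ∈ M) (h : y₁ ++ r₁ = y₂ ++ r₂) : y₁ = y₂ := by
  rcases append_eq_append_iff.mp h with ⟨t, rfl, rfl⟩ | ⟨t, rfl, rfl⟩
  · simp [hM.eq_nil_of_minGen_append hy₁ hy₂ hr₁ hr₂]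
  · simp [hM.eq_nil_of_minGen_append hy₂ hy₁ hr₂ hr₁]

theorem sep_forall_append_ne (hM : FreeSubmonoid M) {y : List α} (hy : y ∈ MinGen M) :
    FreeSubmonoid {w ∈ M | ∀ r ∈ M, y ++ r ≠ w} := by
  refine ⟨⟨⟨hM.1.1, fun r _ h => hy.2.1 (append_eq_nil_iff.mp h).1⟩, ?_⟩, ?_⟩
  · rintro u ⟨hu, hyu⟩ v ⟨hv, hyv⟩
    refine ⟨hM.1.2 u hu v hv, fun r hr hyr => ?_⟩
    rcases eq_or_ne u [] with rfl | hune
    · exact hyv r hr hyr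
    obtain ⟨y', hy', s, hs, rfl⟩ := hM.exists_minGen_append hu hune
    have : y = y' :=
      hM.minGen_append_inj hy hy' hr (hM.1.2 s hs v hv) (by rw [hyr, append_assoc])
    exact hyu s hs (this ▸ rfl)
  · rintro u v w ⟨hu, -⟩ ⟨huv, -⟩ ⟨hw, -⟩ ⟨hvw, hyvw⟩
    refine ⟨hM.2 u v w hu huv hw hvw, fun r hr hyr => ?_⟩
    exact hyvw (r ++ w) (hM.1.2 r hr w hw) (by rw [← hyr, append_assoc])

end FreeSubmonoid

theorem exists_minGen_append_of_mem_minGen_freeHull {X : Set (List α)} {y : List α}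
    (hy : y ∈ MinGen (freeHull X)) : ∃ x ∈ X, ∃ s ∈ freeHull X, y ++ s = x := by
  by_contra! h
  have hsub : freeHull X ⊆ {w ∈ freeHull X | ∀ r ∈ freeHull X, y ++ r ≠ w} :=
    freeHull_minimal ((freeHull_free X).sep_forall_append_ne hy)
      fun x hx => ⟨subset_freeHull X hx, fun r hr => h x hx r hr⟩
  exact (hsub hy.1).2 [] (freeHull_free X).1.1 (append_nil y)

theorem exists_ne_append_eq_of_not_isCode {X : Set (List α)} (hnil : [] ∉ X) (hX : ¬ IsCode X) :
    ∃ x ∈ X, ∃ x' ∈ X, x ≠ x' ∧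
      ∃ l m : List (List α), (∀ u ∈ l, u ∈ X) ∧ (∀ u ∈ m, u ∈ X) ∧
        x ++ l.flatten = x' ++ m.flatten := by
  simp only [IsCode, not_forall] at hX
  obtain ⟨l, m, hl, hm, h, hne⟩ := hX
  obtain ⟨x, l', x', m', hxx, hl', hm', heq⟩ :=
    exists_cons_suffix_ne_of_flatten_eq (fun h0 => hnil (hl _ h0)) (fun h0 => hnil (hm _ h0)) h hne
  have hl'X : ∀ u ∈ x :: l', u ∈ X := fun u hu => hl u (hl'.subset hu)
  have hm'X : ∀ u ∈ x' :: m', u ∈ X := fun u hu => hm u (hm'.subset hu)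
  exact ⟨x, hl'X x mem_cons_self, x', hm'X x' mem_cons_self, hxx, l', m',
    fun u hu => hl'X u (mem_cons_of_mem x hu), fun u hu => hm'X u (mem_cons_of_mem x' hu), heq⟩

open scoped Classical in
noncomputable def headGen (M : Set (List α)) (w : List α) : List α :=
  if h : ∃ y ∈ MinGen M, ∃ r ∈ M, y ++ r = w then h.choose else []

theorem FreeSubmonoid.headGen_eq {M : Set (List α)} (hM : FreeSubmonoid M) {y r w : List α}
    (hy : y ∈ MinGen M) (hr : r ∈ M) (hw : y ++ r = w) : headGen M w = y := by
  have hex : ∃ y ∈ MinGen M, ∃ r ∈ M, y ++ r = w := ⟨y, hy, r, hr, hw⟩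
  rw [headGen, dif_pos hex]
  obtain ⟨hy', r', hr', hw'⟩ := hex.choose_spec
  exact hM.minGen_append_inj hy' hy hr' hr (hw'.trans hw.symm)

theorem minGen_freeHull_subset_image_headGen (X : Set (List α)) :
    MinGen (freeHull X) ⊆ headGen (freeHull X) '' (X \ {[]}) := by
  intro y hy
  obtain ⟨x, hx, s, hs, rfl⟩ := exists_minGen_append_of_mem_minGen_freeHull hy
  refine ⟨y ++ s, ⟨hx, fun h => hy.2.1 (append_eq_nil_iff.mp h).1⟩, ?_⟩
  exact (freeHull_free X).headGen_eq hy hs rfl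

theorem exists_ne_headGen_eq_of_not_isCode {X : Set (List α)} (hnil : [] ∉ X)
    (hX : ¬ IsCode X) : ∃ x ∈ X, ∃ x' ∈ X, x ≠ x' ∧
      headGen (freeHull X) x = headGen (freeHull X) x' := by
  obtain ⟨x, hx, x', hx', hxx, l, m, hl, hm, heq⟩ := exists_ne_append_eq_of_not_isCode hnil hX
  have hN := freeHull_free X
  have hXN := subset_freeHull X
  obtain ⟨y, hy, s, hs, rfl⟩ := hN.exists_minGen_append (hXN hx) fun h => hnil (h ▸ hx)
  obtain ⟨y', hy', s', hs', rfl⟩ := hN.exists_minGen_append (hXN hx') fun h => hnil (h ▸ hx')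
  have hyy : y = y' := by
    refine hN.minGen_append_inj hy hy' (hN.1.2 s hs _ (hN.1.flatten_mem fun u hu => hXN (hl u hu)))
      (hN.1.2 s' hs' _ (hN.1.flatten_mem fun u hu => hXN (hm u hu))) ?_
    simpa only [append_assoc] using heq
  exact ⟨_, hx, _, hx', hxx, by rw [hN.headGen_eq hy hs rfl, hN.headGen_eq hy' hs' rfl, hyy]⟩

theorem ncard_minGen_freeHull_le {X : Set (List α)} (hXfin : X.Finite) (hX : ¬ IsCode X) :
    (MinGen (freeHull X)).ncard ≤ X.ncard - 1 := by
  set f := headGen (freeHull X)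
  have hY : (MinGen (freeHull X)).ncard ≤ (f '' (X \ {[]})).ncard :=
    ncard_le_ncard (minGen_freeHull_subset_image_headGen X) (hXfin.sdiff.image f)
  by_cases hnil : [] ∈ X
  · calc (MinGen (freeHull X)).ncard ≤ (f '' (X \ {[]})).ncard := hY
      _ ≤ (X \ {[]}).ncard := ncard_image_le hXfin.sdiff
      _ = X.ncard - 1 := ncard_sdiff_singleton_of_mem hnil
  · rw [sdiff_singleton_eq_self hnil] at hY
    obtain ⟨x, hx, x', hx', hxx, hf⟩ := exists_ne_headGen_eq_of_not_isCode hnil hX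
    have : (f '' X).ncard < X.ncard :=
      (ncard_image_le hXfin).lt_of_ne fun h => hxx (injOn_of_ncard_image_eq h hXfin hx hx' hf)
    omega

theorem stmt2_general (θ : List α → List α) (hθ : LitAnti θ)
    (X : Set (List α)) (hXfin : X.Finite) (hXinv : Invariant θ X)
    (hXnc : ¬ IsCode X) (Y : Set (List α))
    (hY : Y = MinGen (⋂₀ {M | FreeSubmonoid M ∧ Invariant θ M ∧ X ⊆ M})) :
    Y.ncard ≤ X.ncard - 1 := by
  rw [hY, sInter_freeSubmonoid_invariant_eq_freeHull hθ hXinv]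
  exact ncard_minGen_freeHull_le hXfin hXnc

theorem stmt2 [Countable α] (θ : List α → List α) (hθ : LitAnti θ)
    (X : Set (List α)) (hXfin : X.Finite) (hXinv : Invariant θ X)
    (hXnc : ¬ IsCode X) (Y : Set (List α))
    (hY : Y = MinGen (⋂₀ {M | FreeSubmonoid M ∧ Invariant θ M ∧ X ⊆ M})) :
    Y.ncard ≤ X.ncard - 1 :=
  stmt2_general θ hθ X hXfin hXinv hXnc Y hY
end

section
/- Let |A| ≥ 2, and let z = b̄^n · b x b̄ · b^n denote any word of the form where b ≠ b̄ are letters, |x| = n − 2, n ≥ 2 (so |z| = 3n). Let z' = c̄^n · c x' c̄ · c^n be another word of the same shape and same length (c ≠ c̄ letters, |x'| = n − 2). If u, v ∈ A⁺ with |u| ≤ |z| − 1 satisfy z·v = u·z', then |u| = |v| ≥ 2n, and there is a letter d and a unique integer k with 1 ≤ k ≤ n such that z = u·d^k and z' = d^k·v. -/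
open List

variable {α : Type*}

/-! Write `z = u·w` and `z' = w·v`, so that the overlap `w` is a suffix of `z` and a prefix
of `z'`. If `|w| > n`, the block `c̄ⁿ` that begins `z'` occurs in `z` at a position strictly
between `0` and `2n`; but every window of length `n` there contains both a `b` and a `b̄`.
Hence `|w| ≤ n`, and `w` lies inside the final block `bⁿ` of `z`. -/

def blockWord (b bb : α) (n : ℕ) (x : List α) : List α :=
  replicate n bb ++ [b] ++ x ++ [bb] ++ replicate n b

section BlockWord

variable (b bb : α) (n : ℕ) (x : List α)

theorem length_blockWord : (blockWord b bb n x).length = 2 * n + x.length + 2 := by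
  simp [blockWord]; omega

theorem getElem?_blockWord_of_lt {i : ℕ} (hi : i < n) : (blockWord b bb n x)[i]? = some bb := by
  simp [blockWord, getElem?_append, hi]

theorem getElem?_blockWord_self : (blockWord b bb n x)[n]? = some b := by
  simp [blockWord]

theorem getElem?_blockWord_add_length : (blockWord b bb n x)[n + x.length + 1]? = some bb := by
  rw [blockWord, getElem?_append_left (by simp; omega), getElem?_append_right (by simp; omega)]
  simp

theorem getElem?_blockWord_of_le {i : ℕ} (h₁ : n + x.length + 2 ≤ i)
    (h₂ : i < 2 * n + x.length + 2) : (blockWord b bb n x)[i]? = some b := by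
  rw [blockWord, getElem?_append_right (by simp; omega), getElem?_replicate_of_lt (by simp; omega)]

theorem replicate_prefix_blockWord : replicate n bb <+: blockWord b bb n x := by
  simp only [blockWord, append_assoc]
  exact prefix_append _ _

theorem drop_blockWord (j : ℕ) :
    (blockWord b bb n x).drop (n + x.length + 2 + j) = replicate (n - j) b := by
  have : n + x.length + 2 = (replicate n bb ++ [b] ++ x ++ [bb]).length := by simp; omega
  rw [blockWord, this, drop_length_add_append, drop_replicate]

theorem blockWord_eq_append_replicate_append (hb : b ≠ bb) (hn : 2 ≤ n)
    (hx : x.length = n - 2) {u t : List α} {d : α}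
    (h : blockWord b bb n x = u ++ replicate n d ++ t) : u = [] ∨ 2 * n ≤ u.length := by
  by_contra! hu
  obtain ⟨hu₀, hu₁⟩ := hu
  set p := u.length
  have hp : 0 < p := length_pos_iff.mpr hu₀
  have hd : ∀ i, p ≤ i → i < p + n → (blockWord b bb n x)[i]? = some d := by
    intro i hi₁ hi₂
    rw [h, append_assoc, getElem?_append_right hi₁,
      getElem?_append_left (by simp; omega), getElem?_replicate_of_lt (by omega)]
  have hbd : b = d := by
    rcases le_or_gt p n with hpn | hpn
    · simpa [getElem?_blockWord_self] using hd n hpn (by omega)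
    · simpa [getElem?_blockWord_of_le b bb n x (le_refl _) (by omega)]
        using hd (n + x.length + 2) (by omega) (by omega)
  have hbbd : bb = d := by
    rcases lt_or_ge p n with hpn | hpn
    · simpa [getElem?_blockWord_of_lt b bb n x (Nat.sub_one_lt_of_lt hpn)]
        using hd (n - 1) (by omega) (by omega)
    · simpa [getElem?_blockWord_add_length] using hd (n + x.length + 1) (by omega) (by omega)
  exact hb (hbd.trans hbbd.symm)

end BlockWord

theorem stmt5_general (b bb c cb : α) (hb : b ≠ bb)
    (n : ℕ) (hn : 2 ≤ n) (x x' : List α)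
    (hx : x.length = n - 2) (hx' : x'.length = n - 2)
    (z z' u v : List α)
    (hz : z = List.replicate n bb ++ [b] ++ x ++ [bb] ++ List.replicate n b)
    (hz' : z' = List.replicate n cb ++ [c] ++ x' ++ [cb] ++ List.replicate n c)
    (hu : u ≠ []) (hul : u.length ≤ 3 * n - 1)
    (heq : z ++ v = u ++ z') :
    u.length = v.length ∧ 2 * n ≤ u.length ∧
      ∃ d : α, ∃! k : ℕ, 1 ≤ k ∧ k ≤ n ∧
        z = u ++ List.replicate k d ∧ z' = List.replicate k d ++ v := by
  replace hz : z = blockWord b bb n x := hz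
  replace hz' : z' = blockWord c cb n x' := hz'
  have hzl : z.length = 3 * n := by rw [hz, length_blockWord]; omega
  have hzl' : z'.length = 3 * n := by rw [hz', length_blockWord]; omega
  obtain ⟨w, rfl, rfl⟩ : ∃ w, z = u ++ w ∧ z' = w ++ v := by
    rcases append_eq_append_iff.mp heq with ⟨a, rfl, -⟩ | h
    · simp at hul; omega
    · exact h
  simp only [length_append] at hzl hzl'
  have hwn : w.length ≤ n := by
    by_contra! hwn
    have hpre : replicate n cb <+: w :=
      prefix_of_prefix_length_le (hz' ▸ replicate_prefix_blockWord c cb n x')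
        (prefix_append w v) (by simpa using hwn.le)
    obtain ⟨t, rfl⟩ := hpre
    rcases blockWord_eq_append_replicate_append b bb n x hb hn hx
      (by rw [← hz, append_assoc]) with rfl | hu₂
    · exact hu rfl
    · omega
  have hw : w = replicate (n - (u.length - 2 * n)) b := by
    rw [← drop_left (l₁ := u) (l₂ := w), hz, ← drop_blockWord b bb n x]
    congr 1; omega
  refine ⟨by omega, by omega, b, n - (u.length - 2 * n),
    ⟨by omega, by omega, by rw [hw], by rw [hw]⟩, ?_⟩
  rintro k ⟨-, -, hk, -⟩
  have := congrArg length hk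
  simp only [length_append, length_replicate] at this
  omega

theorem stmt5 (b bb c cb : α) (hb : b ≠ bb) (hc : c ≠ cb)
    (n : ℕ) (hn : 2 ≤ n) (x x' : List α)
    (hx : x.length = n - 2) (hx' : x'.length = n - 2)
    (z z' u v : List α)
    (hz : z = List.replicate n bb ++ [b] ++ x ++ [bb] ++ List.replicate n b)
    (hz' : z' = List.replicate n cb ++ [c] ++ x' ++ [cb] ++ List.replicate n c)
    (hu : u ≠ []) (hv : v ≠ []) (hul : u.length ≤ 3 * n - 1)
    (heq : z ++ v = u ++ z') :
    u.length = v.length ∧ 2 * n ≤ u.length ∧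
      ∃ d : α, ∃! k : ℕ, 1 ≤ k ∧ k ≤ n ∧
        z = u ++ List.replicate k d ∧ z' = List.replicate k d ++ v :=
  stmt5_general b bb c cb hb n hn x x' hx hx' z z' u v hz hz' hu hul heq
end

section
/- Let X ⊆ A* be a θ-invariant code which is not complete, let y ∉ F(X*) with |y| ≥ 2 whose first and last letters differ, write y = a x ā with letters a ≠ ā, set z = ā^{|y|} y a^{|y|}, and let Z = {θⁱ(z) : i ∈ ℤ}. Then A⁺ Z A⁺ ∩ Z X* Z = ∅; that is, no word of the form z₂ w z₃ with z₂, z₃ ∈ Z and w ∈ X* contains an element of Z as a proper internal factor. -/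
open List

variable {α : Type*}

/-!
Write `n = |y|`. Every word of `Z` has the shape `c'ⁿ m cⁿ` with `|m| = n`, `m ∉ F(X*)`, and `m`
beginning with `c` and ending with `c' ≠ c`: a literal (anti)morphism maps this shape to itself
(possibly exchanging `c` and `c'`), and `θ`, `θ⁻¹` both preserve `F(X*)` because `X` is
`θ`-invariant.

In such a word, a constant factor of length `n` can only start at position `0` or `2n`: every
other window of length `n` meets both a `c` and a `c'`. Now if `u z₁ v = z₂ w z₃` with
`u, v ≠ ε`, then the block `c₁'ⁿ` of `z₁` cannot start inside `z₂`, and the block `c₁ⁿ` cannot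
end inside `z₃`; so the middle `m₁` of `z₁` is a factor of `w ∈ X*`, which is impossible.
-/

namespace LitAnti

variable {θ : List α → List α} {X : Set (List α)}

theorem map_nil (hθ : LitAnti θ) : θ [] = [] := by
  rcases hθ.2.2 with hm | hA
  · have h := congrArg length (hm [] [])
    simp only [append_nil, length_append] at h
    exact length_eq_zero_iff.mp (by omega)
  · exact hA.1

theorem map_append_or (hθ : LitAnti θ) (u v : List α) :
    θ (u ++ v) = θ u ++ θ v ∨ θ (u ++ v) = θ v ++ θ u := by
  rcases hθ.2.2 with hm | hA
  · exact .inl (hm u v)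
  · exact .inr (hA.2 u v)

theorem length_map (hθ : LitAnti θ) (w : List α) : (θ w).length = w.length := by
  induction w with
  | nil => simp [hθ.map_nil]
  | cons a t ih =>
    obtain ⟨b, hb⟩ := hθ.2.1 a
    rcases hθ.map_append_or [a] t with h | h <;> simpa [hb, ih, add_comm] using congrArg length h

theorem map_replicate (hθ : LitAnti θ) {c b : α} (hb : θ [c] = [b]) (n : ℕ) :
    θ (replicate n c) = replicate n b := by
  induction n with
  | zero => exact hθ.map_nil
  | succ k ih =>
    rw [replicate_succ, ← singleton_append]
    rcases hθ.map_append_or [c] (replicate k c) with h | h <;> rw [h, hb, ih]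
    · rfl
    · exact (replicate_succ' ..).symm

theorem exists_map_singleton_eq (hθ : LitAnti θ) (b : α) : ∃ a, θ [a] = [b] := by
  obtain ⟨w, hw⟩ := hθ.1.2 [b]
  obtain ⟨a, rfl⟩ : ∃ a, w = [a] :=
    length_eq_one_iff.mp (by simpa [hw] using (hθ.length_map w).symm)
  exact ⟨a, hw⟩

theorem invFun (hθ : LitAnti θ) : LitAnti (Function.invFun θ) := by
  have hl : Function.LeftInverse (Function.invFun θ) θ := Function.leftInverse_invFun hθ.1.1
  have hr : Function.RightInverse (Function.invFun θ) θ := Function.rightInverse_invFun hθ.1.2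
  refine ⟨⟨hr.injective, hl.surjective⟩, fun b => ?_, ?_⟩
  · obtain ⟨a, ha⟩ := hθ.exists_map_singleton_eq b
    exact ⟨a, by rw [← ha, hl]⟩
  · rcases hθ.2.2 with hm | hA
    · exact .inl fun u v => hθ.1.1 (by rw [hr, hm, hr, hr])
    · exact .inr ⟨hθ.1.1 (by rw [hr, hA.1]), fun u v => hθ.1.1 (by rw [hr, hA.2, hr, hr])⟩

theorem map_flatten (hθ : LitAnti θ) (l : List (List α)) :
    θ l.flatten = (l.map θ).flatten ∨ θ l.flatten = (l.map θ).reverse.flatten := by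
  rcases hθ.2.2 with hm | hA
  · left
    induction l with
    | nil => exact hθ.map_nil
    | cons u l ih => rw [flatten_cons, hm, ih, map_cons, flatten_cons]
  · right
    induction l with
    | nil => exact hA.1
    | cons u l ih => simp [hA.2, ih]

theorem map_mem_starSet (hθ : LitAnti θ) (hinv : Invariant θ X) {u : List α}
    (hu : u ∈ StarSet X) : θ u ∈ StarSet X := by
  obtain ⟨l, hl, rfl⟩ := hu
  have hmap : ∀ v ∈ l.map θ, v ∈ X := by
    simp only [mem_map]
    rintro _ ⟨x, hx, rfl⟩
    exact hinv ▸ Set.mem_image_of_mem θ (hl x hx)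
  rcases hθ.map_flatten l with h | h
  · exact ⟨_, hmap, h.symm⟩
  · exact ⟨_, fun v hv => hmap v (mem_reverse.mp hv), h.symm⟩

theorem map_mem_factors (hθ : LitAnti θ) (hinv : Invariant θ X) {u : List α}
    (hu : u ∈ Factors (StarSet X)) : θ u ∈ Factors (StarSet X) := by
  obtain ⟨_, hW, p, s, rfl⟩ := hu
  refine ⟨θ (p ++ u ++ s), hθ.map_mem_starSet hinv hW, ?_⟩
  rcases hθ.2.2 with hm | hA
  · exact ⟨θ p, θ s, by rw [hm, hm]⟩
  · exact ⟨θ s, θ p, by rw [hA.2, hA.2, append_assoc]⟩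

theorem invariant_invFun (hθ : LitAnti θ) (hinv : Invariant θ X) :
    Invariant (Function.invFun θ) X := by
  unfold Invariant
  nth_rw 1 [← hinv]
  exact (Function.leftInverse_invFun hθ.1.1).image_image X

theorem mem_factors_of_map_mem (hθ : LitAnti θ) (hinv : Invariant θ X) {u : List α}
    (hu : θ u ∈ Factors (StarSet X)) : u ∈ Factors (StarSet X) := by
  simpa only [Function.leftInverse_invFun hθ.1.1 u] using
    hθ.invFun.map_mem_factors (hθ.invariant_invFun hinv) hu

end LitAnti

def padWord (n : ℕ) (c c' : α) (t : List α) : List α :=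
  replicate n c' ++ ([c] ++ t ++ [c']) ++ replicate n c

theorem length_padWord {c c' : α} {t : List α} {n : ℕ} (hn : t.length + 2 = n) :
    (padWord n c c' t).length = 3 * n := by
  simp only [padWord, length_append, length_replicate, length_singleton]
  omega

/-- The shape of `z = āⁿ y aⁿ` (`n = |y|`), with `[c] ++ t ++ [c']` in the role of `y`. -/
def IsPaddedNonFactor (X : Set (List α)) (n : ℕ) (w : List α) : Prop :=
  ∃ (c c' : α) (t : List α), c ≠ c' ∧ t.length + 2 = n ∧
    [c] ++ t ++ [c'] ∉ Factors (StarSet X) ∧ w = padWord n c c' t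

namespace IsPaddedNonFactor

variable {θ : List α → List α} {X : Set (List α)} {n : ℕ} {w : List α}

theorem map (h : IsPaddedNonFactor X n w) (hθ : LitAnti θ) (hinv : Invariant θ X) :
    IsPaddedNonFactor X n (θ w) := by
  obtain ⟨c, c', t, hcc, hn, hm, rfl⟩ := h
  obtain ⟨b, hb⟩ := hθ.2.1 c
  obtain ⟨b', hb'⟩ := hθ.2.1 c'
  have hbb : b ≠ b' := by
    rintro rfl
    exact hcc (by simpa using hθ.1.1 (hb.trans hb'.symm))
  have hnf : θ ([c] ++ t ++ [c']) ∉ Factors (StarSet X) :=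
    fun h => hm (hθ.mem_factors_of_map_mem hinv h)
  have hlen : (θ t).length + 2 = n := by rw [hθ.length_map]; exact hn
  rcases hθ.2.2 with hmor | hA
  · refine ⟨b, b', θ t, hbb, hlen, by rwa [hmor, hmor, hb, hb'] at hnf, ?_⟩
    rw [padWord, padWord, hmor, hmor, hmor, hmor, hb, hb', hθ.map_replicate hb,
      hθ.map_replicate hb']
  · refine ⟨b', b, θ t, hbb.symm, hlen, by rwa [hA.2, hA.2, hb, hb', ← append_assoc] at hnf, ?_⟩
    rw [padWord, padWord, hA.2, hA.2, hA.2, hA.2, hb, hb', hθ.map_replicate hb,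
      hθ.map_replicate hb']
    simp only [append_assoc]

theorem iterate (h : IsPaddedNonFactor X n w) (hθ : LitAnti θ) (hinv : Invariant θ X) (i : ℕ) :
    IsPaddedNonFactor X n (θ^[i] w) := by
  induction i with
  | zero => exact h
  | succ k ih =>
    rw [Function.iterate_succ_apply']
    exact ih.map hθ hinv

theorem of_mem_orbitZ {z : List α} (hz : IsPaddedNonFactor X n z) (hθ : LitAnti θ)
    (hinv : Invariant θ X) (hw : w ∈ OrbitZ θ z) : IsPaddedNonFactor X n w := by
  obtain ⟨i, rfl | hi⟩ := hw
  · exact hz.iterate hθ hinv i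
  · rw [← (Function.leftInverse_invFun hθ.1.1).iterate i w, hi]
    exact hz.iterate hθ.invFun (hθ.invariant_invFun hinv) i

end IsPaddedNonFactor

theorem getElem?_padWord {c c' : α} {t : List α} {n : ℕ} (hn : t.length + 2 = n) :
    (padWord n c c' t)[n - 1]? = some c' ∧ (padWord n c c' t)[n]? = some c ∧
      (padWord n c c' t)[2 * n - 1]? = some c' ∧ (padWord n c c' t)[2 * n]? = some c := by
  obtain ⟨k, rfl⟩ : ∃ k, n = k + 1 := ⟨n - 1, by omega⟩
  have h₁ : padWord (k + 1) c c' t =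
      replicate k c' ++ c' :: c :: (t ++ c' :: replicate (k + 1) c) := by
    simp [padWord, replicate_succ']
  have h₂ : padWord (k + 1) c c' t =
      (replicate (k + 1) c' ++ c :: t) ++ c' :: c :: replicate k c := by
    simp [padWord, replicate_succ]
  have i₁ : k + 1 - 1 = (replicate k c').length := by simp
  have i₂ : 2 * (k + 1) - 1 = (replicate (k + 1) c' ++ c :: t).length := by
    simp only [length_append, length_replicate, length_cons]
    omega
  refine ⟨?_, ?_, ?_, ?_⟩
  · rw [h₁, i₁, getElem?_append_right le_rfl]; simp
  · rw [h₁, show k + 1 = (replicate k c').length + 1 by rw [length_replicate],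
      getElem?_append_right (by omega)]
    simp
  · rw [h₂, i₂, getElem?_append_right le_rfl]; simp
  · rw [h₂, show 2 * (k + 1) = (replicate (k + 1) c' ++ c :: t).length + 1 by omega,
      getElem?_append_right (by omega)]
    simp

theorem length_eq_zero_or_of_append_replicate_append_eq_padWord {c c' d : α} {t p s : List α}
    {n : ℕ} (hcc : c ≠ c') (hn : t.length + 2 = n)
    (h : p ++ replicate n d ++ s = padWord n c c' t) : p.length = 0 ∨ p.length = 2 * n := by
  have hlen := congrArg length h
  simp only [length_append, length_replicate, length_padWord hn] at hlen
  have hd : ∀ j < n, (padWord n c c' t)[p.length + j]? = some d := by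
    intro j hj
    rw [← h]
    simp [getElem?_append, hj]
  obtain ⟨e₁, e₂, e₃, e₄⟩ := getElem?_padWord (c := c) (c' := c') hn
  by_contra! hp
  obtain ⟨i, hi, hci⟩ : ∃ i < n, (padWord n c c' t)[p.length + i]? = some c := by
    rcases le_or_gt p.length n with hpn | hpn
    · exact ⟨n - p.length, by omega, by rwa [Nat.add_sub_cancel' hpn]⟩
    · exact ⟨2 * n - p.length, by omega, by rwa [Nat.add_sub_cancel' (by omega)]⟩
  obtain ⟨j, hj, hcj⟩ : ∃ j < n, (padWord n c c' t)[p.length + j]? = some c' := by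
    rcases lt_or_ge p.length n with hpn | hpn
    · exact ⟨n - 1 - p.length, by omega, by rwa [Nat.add_sub_cancel' (by omega)]⟩
    · exact ⟨2 * n - 1 - p.length, by omega, by rwa [Nat.add_sub_cancel' (by omega)]⟩
  exact hcc (Option.some.inj ((hci.symm.trans (hd i hi)).trans ((hd j hj).symm.trans hcj)))

theorem exists_drop_append_append_eq {p m s P w S : List α} (h : p ++ m ++ s = P ++ w ++ S)
    (h₁ : P.length ≤ p.length) (h₂ : p.length + m.length ≤ P.length + w.length) :
    ∃ s', p.drop P.length ++ m ++ s' = w := by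
  have hd := congrArg (drop P.length) h
  rw [append_assoc, drop_append_of_le_length h₁, append_assoc P, drop_left] at hd
  exact prefix_of_prefix_length_le ⟨s, by rw [append_assoc, hd]⟩ (prefix_append w S)
    (by simp only [length_append, length_drop]; omega)

theorem append_append_ne_of_isPaddedNonFactor {X : Set (List α)} {n : ℕ}
    {u v z₁ z₂ z₃ w : List α} (hz₁ : IsPaddedNonFactor X n z₁)
    (hz₂ : IsPaddedNonFactor X n z₂) (hz₃ : IsPaddedNonFactor X n z₃) (hw : w ∈ StarSet X)
    (hu : u ≠ []) (hv : v ≠ []) : u ++ z₁ ++ v ≠ z₂ ++ w ++ z₃ := by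
  obtain ⟨c₁, c₁', t₁, -, hn₁, hm₁, rfl⟩ := hz₁
  obtain ⟨c₂, c₂', t₂, hcc₂, hn₂, -, rfl⟩ := hz₂
  obtain ⟨c₃, c₃', t₃, hcc₃, hn₃, -, rfl⟩ := hz₃
  intro h
  have hlen := congrArg length h
  simp only [length_append, length_padWord hn₁, length_padWord hn₂, length_padWord hn₃] at hlen
  have hm₁len : ([c₁] ++ t₁ ++ [c₁']).length = n := by
    simp only [length_append, length_singleton]
    omega
  have hu₀ := length_pos_iff.mpr hu
  have hv₀ := length_pos_iff.mpr hv
  rcases lt_or_ge u.length (2 * n) with h₁ | h₁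
  · obtain ⟨s', hs'⟩ := exists_drop_append_append_eq (p := u) (m := replicate n c₁')
      (s := [c₁] ++ t₁ ++ [c₁'] ++ replicate n c₁ ++ v) (P := []) (w := padWord n c₂ c₂' t₂)
      (S := w ++ padWord n c₃ c₃' t₃)
      (by simp only [padWord, append_assoc, nil_append] at h ⊢; exact h) (Nat.zero_le _)
      (by simp only [length_nil, length_replicate, length_padWord hn₂]; omega)
    have := length_eq_zero_or_of_append_replicate_append_eq_padWord hcc₂ hn₂ hs'
    simp only [length_nil, drop_zero] at this
    omega
  rcases le_or_gt u.length (n + w.length) with h₂ | h₂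
  · obtain ⟨s', hs'⟩ := exists_drop_append_append_eq (p := u ++ replicate n c₁')
      (m := [c₁] ++ t₁ ++ [c₁']) (s := replicate n c₁ ++ v) (P := padWord n c₂ c₂' t₂) (w := w)
      (S := padWord n c₃ c₃' t₃) (by simp only [padWord, append_assoc] at h ⊢; exact h)
      (by simp only [length_append, length_replicate, length_padWord hn₂]; omega)
      (by simp only [length_append, length_replicate, length_padWord hn₂, hm₁len]; omega)
    exact hm₁ ⟨w, hw, _, s', hs'⟩
  · obtain ⟨s', hs'⟩ := exists_drop_append_append_eq
      (p := u ++ replicate n c₁' ++ ([c₁] ++ t₁ ++ [c₁'])) (m := replicate n c₁) (s := v)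
      (P := padWord n c₂ c₂' t₂ ++ w) (w := padWord n c₃ c₃' t₃) (S := [])
      (by simp only [padWord, append_assoc, append_nil] at h ⊢; exact h)
      (by simp only [length_append, length_replicate, length_padWord hn₂, hm₁len]; omega)
      (by simp only [length_append, length_replicate, length_padWord hn₂, length_padWord hn₃,
        hm₁len]; omega)
    have := length_eq_zero_or_of_append_replicate_append_eq_padWord hcc₃ hn₃ hs'
    simp only [length_drop, length_append, length_replicate, length_padWord hn₂, hm₁len] at this
    omega

theorem stmt6_general (θ : List α → List α) (hθ : LitAnti θ)
    (X : Set (List α)) (hinv : Invariant θ X)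
    (a ab : α) (ha : a ≠ ab) (x y z : List α)
    (hy : y = [a] ++ x ++ [ab]) (hyF : y ∉ Factors (StarSet X))
    (hz : z = List.replicate y.length ab ++ y ++ List.replicate y.length a) :
    ∀ u v z₁ z₂ z₃ w : List α, u ≠ [] → v ≠ [] →
      z₁ ∈ OrbitZ θ z → z₂ ∈ OrbitZ θ z → z₃ ∈ OrbitZ θ z → w ∈ StarSet X →
      u ++ z₁ ++ v ≠ z₂ ++ w ++ z₃ := by
  intro u v z₁ z₂ z₃ w hu hv h₁ h₂ h₃ hw
  have hpad : IsPaddedNonFactor X y.length z :=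
    ⟨a, ab, x, ha, by simp [hy], hy ▸ hyF, by rw [hz, padWord, ← hy]⟩
  exact append_append_ne_of_isPaddedNonFactor (hpad.of_mem_orbitZ hθ hinv h₁)
    (hpad.of_mem_orbitZ hθ hinv h₂) (hpad.of_mem_orbitZ hθ hinv h₃) hw hu hv

theorem stmt6 (θ : List α → List α) (hθ : LitAnti θ)
    (X : Set (List α)) (hcode : IsCode X) (hinv : Invariant θ X)
    (a ab : α) (ha : a ≠ ab) (x y z : List α)
    (hy : y = [a] ++ x ++ [ab]) (hyF : y ∉ Factors (StarSet X))
    (hz : z = List.replicate y.length ab ++ y ++ List.replicate y.length a) :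
    ∀ u v z₁ z₂ z₃ w : List α, u ≠ [] → v ≠ [] →
      z₁ ∈ OrbitZ θ z → z₂ ∈ OrbitZ θ z → z₃ ∈ OrbitZ θ z → w ∈ StarSet X →
      u ++ z₁ ++ v ≠ z₂ ++ w ++ z₃ :=
  stmt6_general θ hθ X hinv a ab ha x y z hy hyF hz
end

section
/- Let A be a finite or countable alphabet with |A| ≥ 2, θ a bijective literal (anti)morphism on A*, and X ⊆ A* a thin θ-invariant code. If X is maximal among θ-invariant codes (no θ-invariant code properly contains X), then X is complete, i.e., F(X*) = A*. -/
open List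

variable {α : Type*}

/-!
Suppose `X` is not complete: pick `w ∉ F(X*)`, letters `a ≠ b`, and put
`y = a^(n+5) b w b a^(n+3) b^(n+4)` with `n = |w|`. A bijective literal (anti)morphism is a
letter bijection, possibly followed by reversal, so every word of the `θ`-orbit `O` of `y` is a
letter-bijection image of `y` or of `yᴿ`; since `θ` preserves `F(X*)`, it still carries a
non-factor of `X*` at distance `n + 5` from both ends. The runs of `y` rule out proper overlaps
longer than `n + 5` between such images. Hence a word of `O` can neither lie inside an
`X*`-product nor overlap a neighbouring word of `O` too much, which forces the first `O`-words
of two factorisations over `X ∪ O` to occupy the same position: `X ∪ O` is a `θ`-invariant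
code, maximality gives `y ∈ X`, and `w` becomes a factor of `X*`.
-/

open Function

section Words

variable {u v x z : List α}

lemma exists_append_of_append_eq_append (h : u ++ v = x ++ z) (hle : u.length ≤ x.length) :
    ∃ t, x = u ++ t ∧ v = t ++ z := by
  obtain ⟨t, rfl⟩ :=
    prefix_of_prefix_length_le (h ▸ prefix_append u v) (prefix_append x z) hle
  exact ⟨t, rfl, append_cancel_left (h.trans (append_assoc u t z))⟩

lemma exists_replicate_prefix_of_map {τ : α → α} (hτ : Injective τ) {L : ℕ} {c : α}
    (h : replicate L c <+: v.map τ) : ∃ c₀, replicate L c₀ <+: v := by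
  have htake : (v.take L).map τ = replicate L c := by
    simpa [map_take] using (prefix_iff_eq_take.mp h).symm
  have hc : ∀ y ∈ v.take L, τ y = c := fun y hy =>
    eq_of_mem_replicate (htake ▸ mem_map_of_mem hy)
  rcases v with _ | ⟨x, v⟩
  · exact ⟨c, by simpa using h⟩
  refine ⟨x, prefix_iff_eq_take.mpr (eq_replicate_iff.mpr ⟨?_, fun y hy => ?_⟩).symm⟩
  · simpa using congrArg length htake
  · rw [length_replicate] at hy
    have hL : L ≠ 0 := by rintro rfl; simp at hy
    exact hτ ((hc y hy).trans (hc x (by cases L <;> simp_all)).symm)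

end Words

def ConstInfixFree (L : ℕ) (v : List α) : Prop := ∀ c : α, ¬ replicate L c <:+: v

namespace ConstInfixFree

variable {L : ℕ} {u v : List α}

lemma of_length_lt (h : v.length < L) : ConstInfixFree L v := fun c hc => by
  simpa using (hc.length_le.trans_lt h)

lemma append (hu : ConstInfixFree L u) (hv : ConstInfixFree L v) (huv : u.getLast? ≠ v.head?) :
    ConstInfixFree L (u ++ v) := by
  intro c hc
  obtain h | h | ⟨l₁, l₂, hl₁, hl₂, hl, hsuf, hpre⟩ := infix_append_iff_ne_nil.mp hc
  · exact hu c h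
  · exact hv c h
  · have e₁ : l₁ = replicate l₁.length c := eq_replicate_iff.mpr
      ⟨rfl, fun x hx => eq_of_mem_replicate (hl ▸ mem_append_left l₂ hx)⟩
    have e₂ : l₂ = replicate l₂.length c := eq_replicate_iff.mpr
      ⟨rfl, fun x hx => eq_of_mem_replicate (hl ▸ mem_append_right l₁ hx)⟩
    have hu' : [c] <:+ u := .trans (singleton_suffix_iff_getLast?_eq_some.mpr (by
      rw [e₁, getLast?_replicate]; simpa using hl₁)) hsuf
    have hv' : [c] <+: v := .trans (singleton_prefix_iff_head?_eq_some.mpr (by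
      rw [e₂, head?_replicate]; simpa using hl₂)) hpre
    exact huv (by rw [singleton_suffix_iff_getLast?_eq_some.mp hu',
      singleton_prefix_iff_head?_eq_some.mp hv'])

end ConstInfixFree

def witnessWord (a b : α) (w : List α) : List α :=
  replicate (w.length + 5) a ++ (b :: w ++ [b]) ++ replicate (w.length + 3) a ++
    replicate (w.length + 4) b

section WitnessWord

variable {a b : α} {w : List α}

lemma constInfixFree_blocks (hab : a ≠ b) {L i j k : ℕ} (hi : i < L) (hw : w.length + 2 < L)
    (hj₀ : 0 < j) (hj : j < L) (hk : k < L) :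
    ConstInfixFree L (replicate i a ++ (b :: w ++ [b]) ++ replicate j a ++ replicate k b) := by
  refine .append (.append (.append (.of_length_lt (by simpa)) (.of_length_lt (by simpa))
    ?_) (.of_length_lt (by simpa)) ?_) (.of_length_lt (by simpa)) ?_
  all_goals simp [getLast?_replicate, head?_replicate, getLast?_cons, hab, hab.symm, hj₀.ne',
    -cons_append]

lemma witnessWord_length : (witnessWord a b w).length = 4 * w.length + 14 := by
  simp only [witnessWord, length_append, length_replicate, length_cons, length_nil]
  omega

lemma witnessWord_drop_one : (witnessWord a b w).drop 1 =
    replicate (w.length + 4) a ++ (b :: w ++ [b]) ++ replicate (w.length + 3) a ++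
      replicate (w.length + 4) b := by
  rw [witnessWord, append_assoc, append_assoc, drop_append_of_le_length (by simp)]
  simp [drop_replicate, append_assoc]

lemma witnessWord_drop_two : (witnessWord a b w).drop 2 =
    replicate (w.length + 3) a ++ (b :: w ++ [b]) ++ replicate (w.length + 3) a ++
      replicate (w.length + 2) b ++ replicate 2 b := by
  rw [append_assoc _ (replicate _ b), replicate_append_replicate, witnessWord, append_assoc,
    append_assoc, append_assoc, drop_append_of_le_length (by simp)]
  simp [drop_replicate, append_assoc]

lemma infix_witnessWord : w <:+: witnessWord a b w :=
  ⟨replicate (w.length + 5) a ++ [b], b :: replicate (w.length + 3) a ++ replicate (w.length + 4) b,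
    by simp [witnessWord]⟩

lemma constInfixFree_witnessWord_drop_one (hab : a ≠ b) :
    ConstInfixFree (w.length + 5) ((witnessWord a b w).drop 1) :=
  witnessWord_drop_one ▸ constInfixFree_blocks hab (by omega) (by omega) (by omega) (by omega)
    (by omega)

lemma not_replicate_prefix_witnessWord_drop (hab : a ≠ b) {d : ℕ} (hd : 1 ≤ d) (c : α) :
    ¬ replicate (w.length + 5) c <+: (witnessWord a b w).drop d := by
  obtain ⟨e, rfl⟩ : ∃ e, d = 1 + e := ⟨d - 1, by omega⟩
  rw [← drop_drop]
  exact fun h =>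
    constInfixFree_witnessWord_drop_one hab c (h.isInfix.trans (drop_suffix _ _).isInfix)

lemma not_replicate_suffix_witnessWord_take (hab : a ≠ b) {k : ℕ} (hk : w.length + 6 ≤ k)
    (c : α) : ¬ replicate (w.length + 5) c <:+ (witnessWord a b w).take k := by
  rintro ⟨s, hs⟩
  have hs₁ : 1 ≤ s.length := by
    have := congrArg length hs
    simp only [length_append, length_replicate, length_take, witnessWord_length] at this
    omega
  refine constInfixFree_witnessWord_drop_one (w := w) hab c
    ⟨s.drop 1, (witnessWord a b w).drop k, ?_⟩
  conv_rhs => rw [← take_append_drop k (witnessWord a b w), ← hs]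
  rw [append_assoc, append_assoc, drop_append_of_le_length hs₁]

lemma not_replicate_prefix_witnessWord_drop_of_two_le (hab : a ≠ b) {d : ℕ} (hd : 2 ≤ d)
    (hk : w.length + 6 ≤ ((witnessWord a b w).drop d).length) (c : α) :
    ¬ replicate (w.length + 4) c <+: (witnessWord a b w).drop d := by
  set M := replicate (w.length + 3) a ++ (b :: w ++ [b]) ++ replicate (w.length + 3) a ++
      replicate (w.length + 2) b
  have hM : ConstInfixFree (w.length + 4) M :=
    constInfixFree_blocks hab (by omega) (by omega) (by omega) (by omega) (by omega)
  have hdrop : (witnessWord a b w).drop d = M.drop (d - 2) ++ replicate 2 b := by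
    obtain ⟨e, rfl⟩ : ∃ e, d = 2 + e := ⟨d - 2, by omega⟩
    rw [← drop_drop, witnessWord_drop_two, drop_append_of_le_length]
    · rw [Nat.add_sub_cancel_left]
    simp only [length_drop, witnessWord_length] at hk
    simp only [length_append, length_replicate, length_cons, length_nil]
    omega
  rw [hdrop] at hk ⊢
  intro h
  refine hM c ((prefix_of_prefix_length_le h (prefix_append _ _) ?_).isInfix.trans
    (drop_suffix _ _).isInfix)
  simp only [length_append, length_replicate] at hk ⊢
  omega

lemma witnessWord_drop_one_map_ne_reverse (hab : a ≠ b) (τ : α → α) :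
    ((witnessWord a b w).drop 1).map τ ≠ ((witnessWord a b w).drop 1).reverse := by
  rw [witnessWord_drop_one]
  intro h
  have h₁ : τ a = b := by
    have := congrArg (·[0]?) h
    simpa [getElem?_append] using this
  have h₂ : τ a = a := by
    have := congrArg (·[w.length + 4 + (w.length + 2)]?) h
    simpa [getElem?_append] using this
  exact hab (h₂.symm.trans h₁)

lemma replicate_prefix_witnessWord_take {k : ℕ} (hk : w.length + 5 ≤ k) :
    replicate (w.length + 5) a <+: (witnessWord a b w).take k :=
  prefix_take_iff.mpr ⟨((prefix_append _ _).trans (prefix_append _ _)).trans (prefix_append _ _),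
    by simpa using hk⟩

lemma replicate_prefix_reverse_witnessWord_drop {d : ℕ}
    (hd : w.length + 4 ≤ ((witnessWord a b w).drop d).length) :
    replicate (w.length + 4) b <+: ((witnessWord a b w).drop d).reverse := by
  rw [← reverse_replicate, reverse_prefix]
  exact suffix_of_suffix_length_le ⟨_, rfl⟩ (drop_suffix _ _) (by simpa using hd)

lemma witnessWord_overlap_le (hab : a ≠ b) {τ : α → α} (hτ : Injective τ)
    {Y₁ Y₂ g h t : List α}
    (hY₁ : Y₁ = witnessWord a b w ∨ Y₁ = (witnessWord a b w).reverse)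
    (hY₂ : Y₂ = witnessWord a b w ∨ Y₂ = (witnessWord a b w).reverse)
    (h₁ : Y₁.map τ = g ++ h) (h₂ : Y₂ = h ++ t) (hg : g ≠ []) :
    h.length ≤ w.length + 5 := by
  -- A run of length `n + 5` occurs in `y` only at position `0`, and one of length `n + 4` only
  -- at positions `0`, `1` and at the very end.
  by_contra! hk
  have hd : 1 ≤ g.length := length_pos_iff.mpr hg
  have hlen : g.length + h.length = (witnessWord a b w).length := by
    have := congrArg length h₁
    rcases hY₁ with rfl | rfl <;> simpa using this.symm
  have hn : (witnessWord a b w).length = 4 * w.length + 14 := witnessWord_length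
  have hdrop : (Y₁.drop g.length).map τ = h := by rw [map_drop, h₁, drop_left]
  have htake : Y₂.take h.length = h := by rw [h₂, take_left]
  have hyd : (witnessWord a b w).reverse.take h.length =
      ((witnessWord a b w).drop g.length).reverse := by
    rw [reverse_drop]; congr 1; omega
  have hyt : (witnessWord a b w).reverse.drop g.length =
      ((witnessWord a b w).take h.length).reverse := by
    rw [reverse_take]; congr 1; omega
  rcases hY₁ with rfl | rfl <;> rcases hY₂ with rfl | rfl
  · obtain ⟨c, hc⟩ := exists_replicate_prefix_of_map hτ
      (hdrop.trans htake.symm ▸ replicate_prefix_witnessWord_take hk.le)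
    exact not_replicate_prefix_witnessWord_drop hab hd c hc
  · have heq : ((witnessWord a b w).drop g.length).map τ =
        ((witnessWord a b w).drop g.length).reverse := by
      rw [hdrop, ← htake, hyd]
    rcases Nat.lt_or_ge 1 g.length with hd₂ | hd₁
    · have hk' : w.length + 6 ≤ ((witnessWord a b w).drop g.length).length := by
        rw [length_drop]; omega
      obtain ⟨c, hc⟩ := exists_replicate_prefix_of_map hτ
        (heq ▸ replicate_prefix_reverse_witnessWord_drop (by omega))
      exact not_replicate_prefix_witnessWord_drop_of_two_le hab hd₂ hk' c hc
    · exact witnessWord_drop_one_map_ne_reverse hab τ (by rwa [show g.length = 1 by omega] at heq)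
  · rw [hyt] at hdrop
    obtain ⟨c, hc⟩ := exists_replicate_prefix_of_map hτ
      (hdrop.trans htake.symm ▸ replicate_prefix_witnessWord_take hk.le)
    rw [← reverse_replicate, reverse_prefix] at hc
    exact not_replicate_suffix_witnessWord_take hab hk c hc
  · have heq : ((witnessWord a b w).take h.length).map τ = (witnessWord a b w).drop g.length := by
      rw [← reverse_inj, ← map_reverse, ← hyt, hdrop, ← htake, hyd]
    refine not_replicate_prefix_witnessWord_drop (w := w) hab hd (τ a) ?_
    simpa [← heq] using (replicate_prefix_witnessWord_take hk.le).map τ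

end WitnessWord

section Factors

variable {X : Set (List α)} {u v : List α}

lemma mem_factors_of_infix {S : Set (List α)} (huv : u <:+: v) (hv : v ∈ Factors S) :
    u ∈ Factors S :=
  let ⟨w, hw, hvw⟩ := hv
  ⟨w, hw, huv.trans hvw⟩

lemma flatten_mem_starSet {l : List (List α)} (hl : ∀ x ∈ l, x ∈ X) :
    l.flatten ∈ StarSet X :=
  ⟨l, hl, rfl⟩

lemma mem_factors_starSet_of_infix_flatten {l : List (List α)} (hl : ∀ x ∈ l, x ∈ X)
    (hu : u <:+: l.flatten) : u ∈ Factors (StarSet X) :=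
  ⟨l.flatten, flatten_mem_starSet hl, hu⟩

end Factors

section UnionCode

variable {X O : Set (List α)} {n P : ℕ}

def HasDeepNonFactor (X : Set (List α)) (P : ℕ) (z : List α) : Prop :=
  ∃ p u s, z = p ++ u ++ s ∧ P ≤ p.length ∧ P ≤ s.length ∧ u ∉ Factors (StarSet X)

def OverlapsAtMost (O : Set (List α)) (P : ℕ) : Prop :=
  ∀ z₁ ∈ O, ∀ z₂ ∈ O, ∀ g h t : List α,
    z₁ = g ++ h → z₂ = h ++ t → g ≠ [] → h.length ≤ P

lemma OverlapsAtMost.mono {O' : Set (List α)} (h : OverlapsAtMost O P) (hO' : O' ⊆ O) :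
    OverlapsAtMost O' P :=
  fun z₁ hz₁ z₂ hz₂ => h z₁ (hO' hz₁) z₂ (hO' hz₂)

lemma HasDeepNonFactor.not_mem_factors {z : List α} (hz : HasDeepNonFactor X P z) :
    z ∉ Factors (StarSet X) := by
  obtain ⟨p, u, s, rfl, -, -, hu⟩ := hz
  exact fun h => hu (mem_factors_of_infix ⟨p, s, rfl⟩ h)

lemma forall_mem_left_or_exists_first_mem_right {l : List (List α)}
    (hl : ∀ x ∈ l, x ∈ X ∪ O) :
    (∀ x ∈ l, x ∈ X) ∨ ∃ l₁ z l₂, l = l₁ ++ z :: l₂ ∧ (∀ x ∈ l₁, x ∈ X) ∧ z ∈ O ∧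
      ∀ x ∈ l₂, x ∈ X ∪ O := by
  induction l with
  | nil => simp
  | cons x l ih =>
    rw [forall_mem_cons] at hl
    by_cases hx : x ∈ X
    · rcases ih hl.2 with h | ⟨l₁, z, l₂, rfl, hl₁, hz, hl₂⟩
      · exact .inl (forall_mem_cons.mpr ⟨hx, h⟩)
      · exact .inr ⟨x :: l₁, z, l₂, rfl, forall_mem_cons.mpr ⟨hx, hl₁⟩, hz, hl₂⟩
    · exact .inr ⟨[], x, l, rfl, by simp, hl.1.resolve_left hx, hl.2⟩

variable (hlen : ∀ z ∈ O, z.length = n) (hdeep : ∀ z ∈ O, HasDeepNonFactor X P z)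
  (hov : OverlapsAtMost O P)
include hlen hdeep hov

lemma false_of_short_overlap {z h h' M : List α} {l : List (List α)} (hz : z ∈ O)
    (hzh : z = h ++ h') (hh : h ≠ []) (hP : h.length ≤ P) (hl : ∀ x ∈ l, x ∈ X ∪ O)
    (hM : l.flatten = h' ++ M) : False := by
  -- in every case the deep non-factor `u` of `z` ends up inside an `X*`-product
  obtain ⟨p, u, s, hzu, hp, hs, hu⟩ := hdeep z hz
  obtain ⟨c, -, hc⟩ := exists_append_of_append_eq_append
    (hzh.symm.trans (hzu.trans (append_assoc p u s))) (hP.trans hp)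
  rcases forall_mem_left_or_exists_first_mem_right hl with
    hX | ⟨l₁, z', l₂, rfl, hl₁, hz', -⟩
  · exact hu (mem_factors_starSet_of_infix_flatten hX ⟨c, s ++ M, by simp [hM, hc]⟩)
  rw [flatten_append, flatten_cons] at hM
  by_cases hle : h'.length ≤ l₁.flatten.length
  · obtain ⟨t, ht, -⟩ := exists_append_of_append_eq_append hM.symm hle
    exact hu (mem_factors_starSet_of_infix_flatten hl₁ ⟨c, s ++ t, by simp [ht, hc]⟩)
  obtain ⟨g, hg, hg'⟩ := exists_append_of_append_eq_append hM (by omega)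
  have hgn : g.length ≤ z'.length := by
    have h₁ := congrArg length hzh
    have h₂ := congrArg length hg
    simp only [length_append, hlen z hz, hlen z' hz'] at h₁ h₂ ⊢
    have := length_pos_iff.mpr hh
    omega
  obtain ⟨t, rfl, -⟩ := exists_append_of_append_eq_append hg'.symm hgn
  have hgP : g.length ≤ P := hov z hz (g ++ t) hz' (h ++ l₁.flatten) g t
    (by rw [hzh, hg, append_assoc]) rfl (by simp [hh])
  have hcu : c ++ u <+: l₁.flatten := by
    refine prefix_of_prefix_length_le ⟨s, by rw [hc, append_assoc]⟩ ⟨g, hg.symm⟩ ?_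
    have := congrArg length (hg.symm.trans hc)
    simp only [length_append] at this ⊢
    omega
  exact hu (mem_factors_starSet_of_infix_flatten hl₁ (infix_append_right.trans hcu.isInfix))

lemma false_of_earlier_mem {A z z' : List α} {l₂ m₁ m₂ : List (List α)} (hz : z ∈ O)
    (hl₂ : ∀ x ∈ l₂, x ∈ X ∪ O) (hm₁ : ∀ x ∈ m₁, x ∈ X) (hz' : z' ∈ O)
    (heq : A ++ (z ++ l₂.flatten) = m₁.flatten ++ (z' ++ m₂.flatten))
    (hlt : A.length < m₁.flatten.length) : False := by
  obtain ⟨g, hg, hg'⟩ := exists_append_of_append_eq_append heq hlt.le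
  have hg₀ : g ≠ [] := by rintro rfl; simp [hg] at hlt
  by_cases hng : n ≤ g.length
  · obtain ⟨t, rfl, -⟩ := exists_append_of_append_eq_append hg' (by rw [hlen z hz]; exact hng)
    exact (hdeep z hz).not_mem_factors
      (mem_factors_starSet_of_infix_flatten hm₁ ⟨A, t, by rw [hg, append_assoc]⟩)
  obtain ⟨h, rfl, hh⟩ := exists_append_of_append_eq_append hg'.symm (by rw [hlen z hz]; omega)
  have hhz' : h.length ≤ z'.length := by
    have := hlen _ hz
    simp only [length_append, hlen z' hz'] at this ⊢
    omega
  obtain ⟨h', rfl, hh'⟩ := exists_append_of_append_eq_append hh.symm hhz'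
  have hh₀ : h ≠ [] := by
    rintro rfl
    have := hlen _ hz
    simp only [append_nil] at this
    omega
  exact false_of_short_overlap hlen hdeep hov hz' rfl hh₀ (hov _ hz _ hz' g h h' rfl rfl hg₀)
    hl₂ hh'

theorem IsCode.union (hcode : IsCode X) : IsCode (X ∪ O) := by
  intro l m hl hm hlm
  induction hN : l.length using Nat.strong_induction_on generalizing l m with
  | _ N ih =>
    rcases forall_mem_left_or_exists_first_mem_right hl with
      hlX | ⟨l₁, z, l₂, rfl, hl₁, hz, hl₂⟩ <;>
    rcases forall_mem_left_or_exists_first_mem_right hm with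
      hmX | ⟨m₁, z', m₂, rfl, hm₁, hz', hm₂⟩
    · exact hcode l m hlX hmX hlm
    · exact ((hdeep z' hz').not_mem_factors (mem_factors_starSet_of_infix_flatten hlX
        ⟨m₁.flatten, m₂.flatten, by simp [hlm]⟩)).elim
    · exact ((hdeep z hz).not_mem_factors (mem_factors_starSet_of_infix_flatten hmX
        ⟨l₁.flatten, l₂.flatten, by simp [← hlm]⟩)).elim
    simp only [flatten_append, flatten_cons] at hlm
    rcases lt_trichotomy l₁.flatten.length m₁.flatten.length with hlt | heq | hgt
    · exact (false_of_earlier_mem hlen hdeep hov hz hl₂ hm₁ hz' hlm hlt).elim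
    · obtain ⟨h₁, h₂⟩ := append_inj hlm heq
      obtain ⟨rfl, h₃⟩ := append_inj h₂ (by rw [hlen z hz, hlen z' hz'])
      have hl₂N : l₂.length < N := by rw [← hN, length_append, length_cons]; omega
      rw [hcode l₁ m₁ hl₁ hm₁ h₁, ih l₂.length hl₂N l₂ m₂ hl₂ hm₂ h₃ rfl]
    · exact (false_of_earlier_mem hlen hdeep hov hz' hm₂ hl₁ hz hlm.symm hgt).elim

end UnionCode

section Morphisms

variable {f : List α → List α} {X : Set (List α)}

lemma IsMorphism.map_nil_s8 (hf : IsMorphism f) : f [] = [] := by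
  have := congrArg length (hf [] [])
  simp only [append_nil, length_append] at this
  exact length_eq_zero_iff.mp (by omega)

lemma IsMorphism.map_flatten (hf : IsMorphism f) :
    ∀ l : List (List α), f l.flatten = (l.map f).flatten
  | [] => hf.map_nil_s8
  | x :: l => by rw [flatten_cons, hf, hf.map_flatten l, map_cons, flatten_cons]

lemma IsAntimorphism.map_flatten (hf : IsAntimorphism f) :
    ∀ l : List (List α), f l.flatten = (l.reverse.map f).flatten
  | [] => hf.1
  | x :: l => by rw [flatten_cons, hf.2, hf.map_flatten l]; simp

lemma map_mem_factors_starSet (hf : IsMorphism f ∨ IsAntimorphism f) (hX : Set.MapsTo f X X)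
    {v : List α} (hv : v ∈ Factors (StarSet X)) : f v ∈ Factors (StarSet X) := by
  obtain ⟨_, ⟨l, hl, rfl⟩, p, s, hps⟩ := hv
  rcases hf with hf | hf
  · refine mem_factors_starSet_of_infix_flatten (l := l.map f)
      (by simpa using fun x hx => hX (hl x hx)) ⟨f p, f s, ?_⟩
    rw [← hf, ← hf, hps, hf.map_flatten]
  · refine mem_factors_starSet_of_infix_flatten (l := l.reverse.map f)
      (by simpa using fun x hx => hX (hl x hx)) ⟨f s, f p, ?_⟩
    rw [← hf.map_flatten, ← hps, hf.2, hf.2, append_assoc]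

lemma not_mem_factors_starSet_of_leftInverse {g : List α → List α}
    (hg : IsMorphism g ∨ IsAntimorphism g) (hX : Set.MapsTo g X X) (hgf : LeftInverse g f)
    {u : List α} (hu : u ∉ Factors (StarSet X)) : f u ∉ Factors (StarSet X) :=
  fun h => hu (hgf u ▸ map_mem_factors_starSet hg hX h)

end Morphisms

def letterMap (σ : α → α) (r : Bool) (v : List α) : List α :=
  (if r then v.reverse else v).map σ

section LetterMap

variable {σ τ : α → α} {r s : Bool}

@[simp]
lemma length_letterMap (v : List α) : (letterMap σ r v).length = v.length := by
  cases r <;> simp [letterMap]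

lemma letterMap_letterMap (v : List α) :
    letterMap σ r (letterMap τ s v) = letterMap (σ ∘ τ) (r ^^ s) v := by
  cases r <;> cases s <;> simp [letterMap, map_reverse]

lemma Function.LeftInverse.letterMap {σ' : α → α} (h : LeftInverse σ' σ) (r : Bool) :
    LeftInverse (letterMap σ' r) (letterMap σ r) := fun v => by
  rw [letterMap_letterMap, h.comp_eq_id]
  cases r <;> simp [_root_.letterMap]

lemma isMorphism_or_isAntimorphism_letterMap :
    IsMorphism (letterMap σ r) ∨ IsAntimorphism (letterMap σ r) := by
  cases r
  · exact .inl fun u v => by simp [letterMap]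
  · exact .inr ⟨rfl, fun u v => by simp [letterMap]⟩

lemma LitAnti.exists_eq_letterMap {θ : List α → List α} (hθ : LitAnti θ) :
    ∃ σ : α → α, Bijective σ ∧ ∃ r, θ = letterMap σ r := by
  obtain ⟨hbij, hlit, hmor⟩ := hθ
  choose σ hσ using hlit
  obtain ⟨r, hr⟩ : ∃ r, θ = letterMap σ r := by
    rcases hmor with hm | ha
    · refine ⟨false, funext fun v => ?_⟩
      induction v with
      | nil => simpa [letterMap] using hm.map_nil_s8
      | cons x v ih => rw [← singleton_append, hm, ih, hσ]; simp [letterMap]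
    · refine ⟨true, funext fun v => ?_⟩
      induction v with
      | nil => simpa [letterMap] using ha.1
      | cons x v ih => rw [← singleton_append, ha.2, ih, hσ]; simp [letterMap]
  refine ⟨σ, ⟨fun x y hxy => ?_, fun c => ?_⟩, r, hr⟩
  · simpa using hbij.1 (show θ [x] = θ [y] by rw [hσ, hσ, hxy])
  · obtain ⟨v, hv⟩ := hbij.2 [c]
    obtain ⟨x, rfl⟩ := length_eq_one_iff.mp (by simpa [hr] using congrArg length hv)
    exact ⟨x, by simpa [hσ] using hv⟩

end LetterMap

section OrbitZ

variable {θ θ' : List α → List α} {y : List α}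

lemma Invariant.mapsTo {X : Set (List α)} (hinv : Invariant θ X) : Set.MapsTo θ X X :=
  fun _ hx => hinv ▸ Set.mem_image_of_mem θ hx

lemma Invariant.mapsTo_of_leftInverse {X : Set (List α)} (hinv : Invariant θ X)
    (h : LeftInverse θ' θ) : Set.MapsTo θ' X X := by
  intro x hx
  rw [← hinv] at hx
  obtain ⟨x, hx, rfl⟩ := hx
  rwa [h]

lemma orbitZ_subset (h : LeftInverse θ' θ) {S : Set (List α)} (hy : y ∈ S)
    (hS : Set.MapsTo θ S S) (hS' : Set.MapsTo θ' S S) : OrbitZ θ y ⊆ S := by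
  rintro z ⟨i, rfl | rfl⟩
  · exact hS.iterate i hy
  · rw [← h.iterate i z]
    exact hS'.iterate i hy

lemma image_orbitZ (h₁ : LeftInverse θ' θ) (h₂ : RightInverse θ' θ) :
    θ '' OrbitZ θ y = OrbitZ θ y := by
  have hmem : ∀ z, z ∈ OrbitZ θ y ↔ ∃ i, z = θ^[i] y ∨ z = θ'^[i] y := fun z =>
    exists_congr fun i => or_congr eq_comm
      ⟨fun h => h ▸ (h₁.iterate i z).symm, fun h => h ▸ h₂.iterate i y⟩
  ext z
  simp only [Set.mem_image, hmem]
  constructor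
  · rintro ⟨_, ⟨i, rfl | rfl⟩, rfl⟩
    · exact ⟨i + 1, .inl (iterate_succ_apply' ..).symm⟩
    · cases i with
      | zero => exact ⟨1, .inl rfl⟩
      | succ i => exact ⟨i, .inr (by rw [iterate_succ_apply', h₂])⟩
  · rintro ⟨i, rfl | rfl⟩
    · cases i with
      | zero => exact ⟨θ' y, ⟨1, .inr rfl⟩, h₂ y⟩
      | succ i => exact ⟨θ^[i] y, ⟨i, .inl rfl⟩, (iterate_succ_apply' ..).symm⟩
    · exact ⟨θ'^[i + 1] y, ⟨i + 1, .inr rfl⟩, by rw [iterate_succ_apply', h₂]⟩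

end OrbitZ

section WitnessOrbit

variable {X : Set (List α)} {a b : α} {w : List α}

def nonFactorPreservingImages (X : Set (List α)) (y : List α) : Set (List α) :=
  {z | ∃ τ s, Bijective τ ∧
    (∀ u ∉ Factors (StarSet X), letterMap τ s u ∉ Factors (StarSet X)) ∧
    z = letterMap τ s y}

lemma letterMap_mem_nonFactorPreservingImages {σ : α → α} {r : Bool} (hσ : Bijective σ)
    (hσX : ∀ u ∉ Factors (StarSet X), letterMap σ r u ∉ Factors (StarSet X)) {y z : List α}
    (hz : z ∈ nonFactorPreservingImages X y) :
    letterMap σ r z ∈ nonFactorPreservingImages X y := by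
  obtain ⟨τ, s, hτ, hτX, rfl⟩ := hz
  exact ⟨σ ∘ τ, r ^^ s, hσ.comp hτ,
    fun u hu => letterMap_letterMap (σ := σ) u ▸ hσX _ (hτX u hu), letterMap_letterMap _⟩

lemma HasDeepNonFactor.letterMap {P : ℕ} {z : List α} (hz : HasDeepNonFactor X P z)
    {τ : α → α} {s : Bool}
    (hτ : ∀ u ∉ Factors (StarSet X), letterMap τ s u ∉ Factors (StarSet X)) :
    HasDeepNonFactor X P (letterMap τ s z) := by
  obtain ⟨p, u, t, rfl, hp, ht, hu⟩ := hz
  cases s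
  · exact ⟨p.map τ, u.map τ, t.map τ, by simp [_root_.letterMap], by simpa using hp,
      by simpa using ht, by simpa [_root_.letterMap] using hτ u hu⟩
  · exact ⟨(t.map τ).reverse, (u.map τ).reverse, (p.map τ).reverse,
      by simp [_root_.letterMap, map_reverse], by simpa using ht, by simpa using hp,
      by simpa [_root_.letterMap, map_reverse] using hτ u hu⟩

lemma witnessWord_hasDeepNonFactor (hw : w ∉ Factors (StarSet X)) :
    HasDeepNonFactor X (w.length + 5) (witnessWord a b w) :=
  ⟨replicate (w.length + 5) a ++ [b], w,
    b :: replicate (w.length + 3) a ++ replicate (w.length + 4) b, by simp [witnessWord], by simp,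
    by simp, hw⟩

lemma overlapsAtMost_letterMap_witnessWord (hab : a ≠ b) :
    OverlapsAtMost {z | ∃ τ s, Bijective τ ∧ z = letterMap τ s (witnessWord a b w)}
      (w.length + 5) := by
  have hY : ∀ s : Bool, letterMap id s (witnessWord a b w) = witnessWord a b w ∨
      letterMap id s (witnessWord a b w) = (witnessWord a b w).reverse := by
    intro s; cases s <;> simp [letterMap]
  rintro _ ⟨τ₁, s₁, hτ₁, rfl⟩ _ ⟨τ₂, s₂, hτ₂, rfl⟩ g h t h₁ h₂ hg
  obtain ⟨τ₂', hl, hr⟩ := bijective_iff_has_inverse.mp hτ₂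
  have h₁' := congrArg (map τ₂') h₁
  have h₂' := congrArg (map τ₂') h₂
  simp only [letterMap, map_map, map_append, hl.comp_eq_id, map_id] at h₁' h₂'
  simpa using witnessWord_overlap_le (g := g.map τ₂') (h := h.map τ₂') (t := t.map τ₂') hab
    (hr.injective.comp hτ₁.1) (hY s₁) (hY s₂) (by simpa [letterMap] using h₁')
    (by simpa [letterMap] using h₂') (by simpa using hg)

end WitnessOrbit

lemma orbitZ_letterMap_subset {X : Set (List α)} {σ σ' : α → α} {r : Bool}
    (h₁ : LeftInverse σ' σ) (h₂ : RightInverse σ' σ) (hinv : Invariant (letterMap σ r) X)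
    (y : List α) : OrbitZ (letterMap σ r) y ⊆ nonFactorPreservingImages X y := by
  have hl := h₁.letterMap r
  have hr : RightInverse (letterMap σ' r) (letterMap σ r) := h₂.letterMap r
  refine orbitZ_subset hl ⟨id, false, bijective_id, fun u hu => by simpa [letterMap],
    by simp [letterMap]⟩ (fun z => letterMap_mem_nonFactorPreservingImages
      ⟨h₁.injective, h₂.surjective⟩ fun u => ?_)
    (fun z => letterMap_mem_nonFactorPreservingImages
      ⟨h₂.injective, h₁.rightInverse.surjective⟩ fun u => ?_)
  · exact not_mem_factors_starSet_of_leftInverse isMorphism_or_isAntimorphism_letterMap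
      (hinv.mapsTo_of_leftInverse hl) hl
  · exact not_mem_factors_starSet_of_leftInverse isMorphism_or_isAntimorphism_letterMap
      hinv.mapsTo hr

lemma isCode_union_orbitZ_witnessWord {X : Set (List α)} {θ : List α → List α} {a b : α}
    {w : List α} (hab : a ≠ b) (hθ : LitAnti θ) (hcode : IsCode X) (hinv : Invariant θ X)
    (hw : w ∉ Factors (StarSet X)) : IsCode (X ∪ OrbitZ θ (witnessWord a b w)) := by
  obtain ⟨σ, hσ, r, rfl⟩ := hθ.exists_eq_letterMap
  obtain ⟨σ', h₁, h₂⟩ := bijective_iff_has_inverse.mp hσ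
  have hO := orbitZ_letterMap_subset h₁ h₂ hinv (witnessWord a b w)
  refine hcode.union (n := (witnessWord a b w).length) (fun z hz => ?_) (fun z hz => ?_)
    ((overlapsAtMost_letterMap_witnessWord (w := w) hab).mono fun z hz => ?_)
  all_goals obtain ⟨τ, s, hτ, hτX, rfl⟩ := hO hz
  · exact length_letterMap _
  · exact (witnessWord_hasDeepNonFactor hw).letterMap hτX
  · exact ⟨τ, s, hτ, rfl⟩

theorem stmt8_general (hA : ∃ a b : α, a ≠ b)
    (θ : List α → List α) (hθ : LitAnti θ)
    (X : Set (List α)) (hcode : IsCode X)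
    (hinv : Invariant θ X)
    (hmax : ∀ Y : Set (List α), IsCode Y → Invariant θ Y → X ⊆ Y → Y = X) :
    Complete X := by
  obtain ⟨a, b, hab⟩ := hA
  obtain ⟨θ', h₁, h₂⟩ := bijective_iff_has_inverse.mp hθ.1
  refine Set.eq_univ_of_forall fun w => by_contra fun hw => ?_
  have hinvO : Invariant θ (X ∪ OrbitZ θ (witnessWord a b w)) := by
    rw [Invariant, Set.image_union, hinv, image_orbitZ h₁ h₂]
  have hy : witnessWord a b w ∈ X :=
    hmax _ (isCode_union_orbitZ_witnessWord hab hθ hcode hinv hw) hinvO Set.subset_union_left ▸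
      Or.inr ⟨0, .inl rfl⟩
  exact hw (mem_factors_of_infix (infix_witnessWord (a := a) (b := b))
    (mem_factors_starSet_of_infix_flatten (l := [_]) (by simpa using hy) (by simp)))

theorem stmt8 [Countable α] (hA : ∃ a b : α, a ≠ b)
    (θ : List α → List α) (hθ : LitAnti θ)
    (X : Set (List α)) (hthin : Thin X) (hcode : IsCode X)
    (hinv : Invariant θ X)
    (hmax : ∀ Y : Set (List α), IsCode Y → Invariant θ Y → X ⊆ Y → Y = X) :
    Complete X :=
  stmt8_general hA θ hθ X hcode hinv hmax
end

section
/- Let A be finite or countable with |A| ≥ 2, θ a bijective literal (anti)morphism on A*, and X a θ-invariant prefix code that is not complete. Then there exists a nonempty θ-invariant set Y ⊆ A⁺ disjoint from X such that X ∪ Y is still a θ-invariant prefix code; in particular X is not maximal in the family of θ-invariant prefix codes. -/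
open List

variable {α : Type*}

/-! A word `z` that is not a factor of `X*` exists since `X` is not complete. Stripping words
of `X` off the left of `z` yields a word `u` with no prefix in `X` that is still no prefix of a
word of `X*`; symmetrically one gets `v` on the right. Then `w = u v` is incomparable with every
word of `X` both in the prefix and in the suffix order. A bijective (anti)morphism stabilising `X`
either preserves both orders or exchanges them, so every word in the `θ`-orbit of `w` is again
incomparable with `X`; all these words have length `|w|`, so adding the orbit to `X` keeps a
prefix code. -/

section StarSet

variable {X : Set (List α)}

lemma nil_mem_starSet : [] ∈ StarSet X := ⟨[], by simp, rfl⟩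

lemma mem_starSet_of_mem {x : List α} (hx : x ∈ X) : x ∈ StarSet X :=
  ⟨[x], by simpa using hx, by simp⟩

lemma append_mem_starSet {u v : List α} (hu : u ∈ StarSet X) (hv : v ∈ StarSet X) :
    u ++ v ∈ StarSet X := by
  obtain ⟨l, hl, rfl⟩ := hu
  obtain ⟨m, hm, rfl⟩ := hv
  exact ⟨l ++ m, by simpa [or_imp, forall_and] using And.intro hl hm, by simp⟩

lemma exists_not_isPrefix_starSet (hX : [] ∉ X) {z : List α}
    (hz : ∀ m ∈ StarSet X, ¬ z <+: m) :
    ∃ u, (∀ m ∈ StarSet X, ¬ u <+: m) ∧ ∀ x ∈ X, ¬ x <+: u := by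
  by_cases h : ∃ x ∈ X, x <+: z
  · obtain ⟨x, hx, u, rfl⟩ := h
    have : x ≠ [] := fun h => hX (h ▸ hx)
    refine exists_not_isPrefix_starSet hX (z := u) fun m hm ⟨t, ht⟩ => ?_
    exact hz _ (append_mem_starSet (mem_starSet_of_mem hx) hm) ⟨t, by simp [← ht]⟩
  · push Not at h
    exact ⟨z, hz, h⟩
termination_by z.length
decreasing_by subst_vars; simp [List.length_pos_iff.mpr this]

lemma exists_not_isSuffix_starSet (hX : [] ∉ X) {z : List α}
    (hz : ∀ m ∈ StarSet X, ¬ z <:+ m) :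
    ∃ v, (∀ m ∈ StarSet X, ¬ v <:+ m) ∧ ∀ x ∈ X, ¬ x <:+ v := by
  by_cases h : ∃ x ∈ X, x <:+ z
  · obtain ⟨x, hx, v, rfl⟩ := h
    have : x ≠ [] := fun h => hX (h ▸ hx)
    refine exists_not_isSuffix_starSet hX (z := v) fun m hm ⟨t, ht⟩ => ?_
    exact hz _ (append_mem_starSet hm (mem_starSet_of_mem hx)) ⟨t, by simp [← ht]⟩
  · push Not at h
    exact ⟨z, hz, h⟩
termination_by z.length
decreasing_by subst_vars; simp [List.length_pos_iff.mpr this]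

end StarSet

def AffixIncomparable (X : Set (List α)) (w : List α) : Prop :=
  ∀ x ∈ X, ¬ x <+: w ∧ ¬ w <+: x ∧ ¬ x <:+ w ∧ ¬ w <:+ x

lemma exists_affixIncomparable {X : Set (List α)} (hX : [] ∉ X) (hnc : ¬ Complete X) :
    ∃ w ≠ [], AffixIncomparable X w := by
  obtain ⟨z, hz⟩ : ∃ z, z ∉ Factors (StarSet X) := by
    by_contra! h
    exact hnc (Set.eq_univ_of_forall h)
  obtain ⟨u, hu, huX⟩ := exists_not_isPrefix_starSet hX (z := z)
    fun m hm ⟨s, hs⟩ => hz ⟨m, hm, [], s, by simpa using hs⟩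
  obtain ⟨v, hv, hvX⟩ := exists_not_isSuffix_starSet hX (z := z)
    fun m hm ⟨p, hp⟩ => hz ⟨m, hm, p, [], by simpa using hp⟩
  refine ⟨u ++ v, fun h => hu [] nil_mem_starSet (by simp [List.append_eq_nil_iff.mp h]),
    fun x hx => ⟨fun h => ?_, fun h => ?_, fun h => ?_, fun h => ?_⟩⟩
  · rcases List.prefix_or_prefix_of_prefix h (List.prefix_append u v) with h | h
    · exact huX x hx h
    · exact hu x (mem_starSet_of_mem hx) h
  · exact hu x (mem_starSet_of_mem hx) ((List.prefix_append u v).trans h)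
  · rcases List.suffix_or_suffix_of_suffix h (List.suffix_append u v) with h | h
    · exact hvX x hx h
    · exact hv x (mem_starSet_of_mem hx) h
  · exact hv x (mem_starSet_of_mem hx) ((List.suffix_append u v).trans h)

section Morphism

variable {φ ψ : List α → List α} {u v : List α}

lemma IsMorphism.map_nil_s11 (h : IsMorphism φ) : φ [] = [] := by
  have := congrArg List.length (h [] [])
  simp only [List.append_nil, List.length_append, left_eq_add] at this
  exact List.eq_nil_of_length_eq_zero this

lemma IsMorphism.isPrefix_map (h : IsMorphism φ) (huv : u <+: v) : φ u <+: φ v := by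
  obtain ⟨t, rfl⟩ := huv
  exact ⟨φ t, (h u t).symm⟩

lemma IsMorphism.isSuffix_map (h : IsMorphism φ) (huv : u <:+ v) : φ u <:+ φ v := by
  obtain ⟨t, rfl⟩ := huv
  exact ⟨φ t, (h t u).symm⟩

lemma IsAntimorphism.isSuffix_map_of_isPrefix (h : IsAntimorphism φ) (huv : u <+: v) :
    φ u <:+ φ v := by
  obtain ⟨t, rfl⟩ := huv
  exact ⟨φ t, (h.2 u t).symm⟩

lemma IsAntimorphism.isPrefix_map_of_isSuffix (h : IsAntimorphism φ) (huv : u <:+ v) :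
    φ u <+: φ v := by
  obtain ⟨t, rfl⟩ := huv
  exact ⟨φ t, (h.2 t u).symm⟩

lemma IsMorphism.of_inverse (h : IsMorphism φ) (hl : Function.LeftInverse ψ φ)
    (hr : Function.RightInverse ψ φ) : IsMorphism ψ := fun u v => by
  conv_lhs => rw [← hr u, ← hr v, ← h, hl]

lemma IsAntimorphism.of_inverse (h : IsAntimorphism φ) (hl : Function.LeftInverse ψ φ)
    (hr : Function.RightInverse ψ φ) : IsAntimorphism ψ := by
  refine ⟨?_, fun u v => ?_⟩
  · conv_lhs => rw [← h.1, hl]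
  · conv_lhs => rw [← hr u, ← hr v, ← h.2, hl]

lemma length_map_of_literal (hlit : Literal φ) (hφ : IsMorphism φ ∨ IsAntimorphism φ)
    (u : List α) : (φ u).length = u.length := by
  induction u with
  | nil => rw [hφ.elim IsMorphism.map_nil_s11 And.left]
  | cons a t ih =>
    obtain ⟨b, hb⟩ := hlit a
    rcases hφ with h | h
    · rw [← List.singleton_append, h, hb]
      simp [ih]
    · rw [← List.singleton_append, h.2, hb]
      simp [ih]

lemma AffixIncomparable.map {X : Set (List α)} {θ : List α → List α} {w : List α}
    (hw : AffixIncomparable X w) (hψ : IsMorphism ψ ∨ IsAntimorphism ψ)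
    (hψX : Set.MapsTo ψ X X) (hψθ : Function.LeftInverse ψ θ) :
    AffixIncomparable X (θ w) := by
  intro x hx
  have key := hw (ψ x) (hψX hx)
  rw [← hψθ w] at key
  rcases hψ with h | h
  · exact ⟨fun h' => key.1 (h.isPrefix_map h'), fun h' => key.2.1 (h.isPrefix_map h'),
      fun h' => key.2.2.1 (h.isSuffix_map h'), fun h' => key.2.2.2 (h.isSuffix_map h')⟩
  · exact ⟨fun h' => key.2.2.1 (h.isSuffix_map_of_isPrefix h'),
      fun h' => key.2.2.2 (h.isSuffix_map_of_isPrefix h'),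
      fun h' => key.1 (h.isPrefix_map_of_isSuffix h'),
      fun h' => key.2.1 (h.isPrefix_map_of_isSuffix h')⟩

end Morphism

section Orbit

variable {θ g : List α → List α} {w : List α}

lemma forall_mem_orbitZ (hl : Function.LeftInverse g θ) {Q : List α → Prop}
    (hθ : ∀ u, Q u → Q (θ u)) (hg : ∀ u, Q u → Q (g u)) (hw : Q w) :
    ∀ v ∈ OrbitZ θ w, Q v := by
  rintro v ⟨i, rfl | hi⟩
  · exact Function.Iterate.rec Q hw hθ i
  · rw [← hl.iterate i v, hi]
    exact Function.Iterate.rec Q hw hg i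

lemma image_orbitZ_s11 (hl : Function.LeftInverse g θ) (hr : Function.RightInverse g θ) :
    θ '' OrbitZ θ w = OrbitZ θ w := by
  refine Set.Subset.antisymm ?_ fun v hv => ⟨g v, ?_, hr v⟩
  · rintro _ ⟨v, ⟨i, rfl | hi⟩, rfl⟩
    · exact ⟨i + 1, .inl (Function.iterate_succ_apply' θ i w)⟩
    · cases i with
      | zero => exact ⟨1, .inl (by simp_all)⟩
      | succ j => exact ⟨j, .inr hi⟩
  · obtain ⟨i, hi | hi⟩ := hv
    · cases i with
      | zero => exact ⟨1, .inr (by simp [← hi, hr w])⟩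
      | succ j => exact ⟨j, .inl (by rw [← hi, Function.iterate_succ_apply', hl])⟩
    · exact ⟨i + 1, .inr (by rw [Function.iterate_succ_apply, hr v, hi])⟩

end Orbit

section PrefixCode

variable {X Y : Set (List α)}

lemma isPrefixCode_of_length_eq (hY : [] ∉ Y)
    (hlen : ∀ y ∈ Y, ∀ y' ∈ Y, y.length = y'.length) : IsPrefixCode Y := by
  refine ⟨hY, fun y hy u hu => ?_⟩
  have := hlen _ hu y hy
  simp only [List.length_append, add_eq_left] at this
  exact List.eq_nil_of_length_eq_zero this

lemma IsPrefixCode.union (hX : IsPrefixCode X) (hY : IsPrefixCode Y)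
    (hXY : ∀ x ∈ X, ∀ y ∈ Y, ¬ x <+: y ∧ ¬ y <+: x) : IsPrefixCode (X ∪ Y) := by
  refine ⟨fun h => h.elim hX.1 hY.1, ?_⟩
  rintro x (hx | hx) u (hu | hu)
  · exact hX.2 x hx u hu
  · exact absurd (List.prefix_append x u) (hXY x hx _ hu).1
  · exact absurd (List.prefix_append x u) (hXY _ hu x hx).2
  · exact hY.2 x hx u hu

end PrefixCode

theorem stmt11_general
    (θ : List α → List α) (hθ : LitAnti θ)
    (X : Set (List α)) (hinv : Invariant θ X) (hpre : IsPrefixCode X)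
    (hnc : ¬ Complete X) :
    ∃ Y : Set (List α), Y.Nonempty ∧ [] ∉ Y ∧ Invariant θ Y ∧
      Disjoint X Y ∧ IsPrefixCode (X ∪ Y) ∧ Invariant θ (X ∪ Y) := by
  obtain ⟨hbij, hlit, hθm⟩ := hθ
  obtain ⟨g, hl, hr⟩ := Function.bijective_iff_has_inverse.mp hbij
  have hgm : IsMorphism g ∨ IsAntimorphism g :=
    hθm.imp (·.of_inverse hl hr) (·.of_inverse hl hr)
  have hθX : Set.MapsTo θ X X := fun x hx => hinv ▸ Set.mem_image_of_mem θ hx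
  have hgX : Set.MapsTo g X X := by
    intro x hx
    obtain ⟨y, hy, rfl⟩ := hinv.symm ▸ hx
    rwa [hl]
  obtain ⟨w, hw0, hw⟩ := exists_affixIncomparable hpre.1 hnc
  have hlen := length_map_of_literal hlit hθm
  have horbit := forall_mem_orbitZ hl (Q := fun v => AffixIncomparable X v ∧ v.length = w.length)
    (fun u hu => ⟨hu.1.map hgm hgX hl, hlen u ▸ hu.2⟩)
    (fun u hu => ⟨hu.1.map hθm hθX hr, by rw [← hu.2, ← hr u, hl, hlen]⟩) ⟨hw, rfl⟩
  have hnil : [] ∉ OrbitZ θ w := fun h => hw0 (List.eq_nil_of_length_eq_zero (horbit _ h).2.symm)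
  have hinc : ∀ x ∈ X, ∀ y ∈ OrbitZ θ w, ¬ x <+: y ∧ ¬ y <+: x :=
    fun x hx y hy => ⟨((horbit y hy).1 x hx).1, ((horbit y hy).1 x hx).2.1⟩
  refine ⟨OrbitZ θ w, ⟨w, 0, .inl rfl⟩, hnil, image_orbitZ_s11 hl hr,
    Set.disjoint_left.mpr fun x hx hy => (hinc x hx x hy).1 List.prefix_rfl,
    hpre.union (isPrefixCode_of_length_eq hnil fun y hy y' hy' => by
      rw [(horbit y hy).2, (horbit y' hy').2]) hinc, ?_⟩
  rw [Invariant, Set.image_union, hinv, image_orbitZ_s11 hl hr]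

theorem stmt11 [Countable α] (hA : ∃ a b : α, a ≠ b)
    (θ : List α → List α) (hθ : LitAnti θ)
    (X : Set (List α)) (hinv : Invariant θ X) (hpre : IsPrefixCode X)
    (hnc : ¬ Complete X) :
    ∃ Y : Set (List α), Y.Nonempty ∧ [] ∉ Y ∧ Invariant θ Y ∧
      Disjoint X Y ∧ IsPrefixCode (X ∪ Y) ∧ Invariant θ (X ∪ Y) :=
  stmt11_general θ hθ X hinv hpre hnc
end

section
/- Let A be an alphabet with at least 3 distinct letters a, b, c satisfying a ≠ b, b ≠ c. Let y be an overlapping-free word with |y| ≥ 3 whose first two letters are both c, and let θ be an involutive antimorphism with θ(a) = b and θ(b) = a. Then the word t = a^{|y|} b θ(y) y a b^{|y|} is overlapping-free and satisfies θ(t) = t. -/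
open List

variable {α : Type*}

/-! An overlap `u t = t v` makes `k = |u|` a period of `t = aⁿ b θ(y) y a bⁿ` (`n = |y|`), with
`0 < k < |t|`. Every position `i < n` of `t` carries `a`, so `t[i + k] = a` as well, and a suitable
`i` rules out each `k`: for `k ≤ n` the letter `b` at position `n`; for `n < k ≤ 2n` the last letter
`θ(c)` of `θ(y)`, which is not `a` because `c ≠ b = θ(a)`; for `k > 2n + 2` the block `bⁿ`. For
`k ∈ {2n + 1, 2n + 2}` the shift puts `a` at positions `1` and `n - 1` of `y`, and since `y` starts
with `cc` it begins and ends with `a`, so `y` itself has an overlap. -/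

theorem getElem?_eq_of_append_eq_append {u v w : List α} (h : u ++ w = w ++ v) {j : ℕ}
    (hj : u.length + j < w.length) : w[j]? = w[u.length + j]? := by
  have := congrArg (·[u.length + j]?) h
  simpa [getElem?_append_right, getElem?_append_left hj] using this

theorem not_overlapFree_of_getElem?_zero_eq_last {w : List α} (hw : 2 ≤ w.length)
    (h : w[0]? = w[w.length - 1]?) : ¬ OverlapFree w := by
  obtain ⟨x, s, z, rfl⟩ : ∃ x s z, w = x :: s ++ [z] := by
    obtain ⟨x, r, rfl⟩ := exists_cons_of_length_pos (by omega : 0 < w.length)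
    obtain ⟨s, z, rfl⟩ := eq_nil_or_concat' r |>.resolve_left (by rintro rfl; simp at hw)
    exact ⟨x, s, z, rfl⟩
  obtain rfl : x = z := by simpa [getElem?_append] using h
  exact fun hof => hof ⟨x :: s, s ++ [x], by simp, by simp, by simp⟩

def frame (a b : α) (x y : List α) : List α :=
  replicate y.length a ++ [b] ++ x ++ y ++ [a] ++ replicate y.length b

section frame

variable {a b : α} {x y : List α}

theorem length_frame (hxy : x.length = y.length) :
    (frame a b x y).length = 4 * y.length + 2 := by
  grind [frame]

theorem getElem?_frame_of_lt {i : ℕ} (hi : i < y.length) : (frame a b x y)[i]? = some a := by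
  grind [frame]

theorem getElem?_frame_length : (frame a b x y)[y.length]? = some b := by
  grind [frame]

theorem getElem?_frame_add_left {i : ℕ} (hi : i < x.length) :
    (frame a b x y)[y.length + 1 + i]? = x[i]? := by
  grind [frame]

theorem getElem?_frame_add_right (hxy : x.length = y.length) {i : ℕ} (hi : i < y.length) :
    (frame a b x y)[2 * y.length + 1 + i]? = y[i]? := by
  grind [frame]

theorem getElem?_frame_add_of_lt (hxy : x.length = y.length) {i : ℕ} (hi : i < y.length) :
    (frame a b x y)[3 * y.length + 2 + i]? = some b := by
  grind [frame]

theorem overlapFree_frame (hab : a ≠ b) (hxy : x.length = y.length) (hy : 2 ≤ y.length)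
    (hx : x.getLast? ≠ some a) (hy01 : y[0]? = y[1]?) (hyof : OverlapFree y) :
    OverlapFree (frame a b x y) := by
  rintro ⟨u, v, hu, hul, huv⟩
  set n := y.length
  have hk : 0 < u.length := length_pos_iff.mpr hu
  rw [length_frame hxy] at hul
  have ha : ∀ i < n, ∀ j, u.length + i = j → j < 4 * n + 2 → (frame a b x y)[j]? = some a := by
    rintro i hi j rfl hj
    rw [← getElem?_eq_of_append_eq_append huv (by rw [length_frame hxy]; exact hj)]
    exact getElem?_frame_of_lt hi
  rw [getLast?_eq_getElem?, hxy] at hx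
  obtain hk | hk | hk | hk : u.length ≤ n ∨ n < u.length ∧ u.length ≤ 2 * n ∨
      2 * n < u.length ∧ u.length ≤ 2 * n + 2 ∨ 2 * n + 2 < u.length := by omega
  · have := ha (n - u.length) (by omega) n (by omega) (by omega)
    rw [getElem?_frame_length] at this
    exact hab (Option.some.inj this).symm
  · have := ha (2 * n - u.length) (by omega) _ (by omega : _ = n + 1 + (n - 1)) (by omega)
    rw [getElem?_frame_add_left (by omega)] at this
    exact hx this
  · have hy1 := ha (2 * n + 2 - u.length) (by omega) _ (by omega : _ = 2 * n + 1 + 1) (by omega)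
    have hyl := ha (3 * n - u.length) (by omega) _ (by omega : _ = 2 * n + 1 + (n - 1)) (by omega)
    rw [getElem?_frame_add_right hxy (by omega)] at hy1 hyl
    exact not_overlapFree_of_getElem?_zero_eq_last hy (by rw [hy01, hy1, hyl]) hyof
  · have := ha (3 * n + 2 - u.length) (by omega) _
      (by omega : _ = 3 * n + 2 + (u.length - (3 * n + 2))) (by omega)
    rw [getElem?_frame_add_of_lt hxy (by omega)] at this
    exact hab (Option.some.inj this).symm

end frame

namespace IsAntimorphism

variable {θ : List α → List α}

theorem map_cons (hθ : IsAntimorphism θ) (x : α) (w : List α) : θ (x :: w) = θ w ++ θ [x] :=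
  hθ.2 [x] w

theorem length_map (hθ : IsAntimorphism θ) (hlit : Literal θ) (w : List α) :
    (θ w).length = w.length := by
  induction w with
  | nil => simp [hθ.1]
  | cons x w ih =>
    obtain ⟨x', hx'⟩ := hlit x
    rw [hθ.map_cons, length_append, ih, hx', length_singleton, length_cons]

theorem map_replicate (hθ : IsAntimorphism θ) {x x' : α} (hx : θ [x] = [x']) (n : ℕ) :
    θ (replicate n x) = replicate n x' := by
  induction n with
  | zero => exact hθ.1
  | succ n ih => rw [replicate_succ, hθ.map_cons, ih, hx, replicate_succ']

end IsAntimorphism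

theorem stmt14_general (a b c : α) (hab : a ≠ b) (hbc : b ≠ c)
    (θ : List α → List α) (hlit : Literal θ) (hanti : IsAntimorphism θ)
    (hinvol : ∀ w, θ (θ w) = w) (hθa : θ [a] = [b]) (hθb : θ [b] = [a])
    (y : List α) (hy2 : y.take 2 = [c, c])
    (hyof : OverlapFree y) :
    OverlapFree (List.replicate y.length a ++ [b] ++ θ y ++ y ++ [a] ++
        List.replicate y.length b) ∧
      θ (List.replicate y.length a ++ [b] ++ θ y ++ y ++ [a] ++
          List.replicate y.length b) =
        List.replicate y.length a ++ [b] ++ θ y ++ y ++ [a] ++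
          List.replicate y.length b := by
  obtain ⟨z, hz⟩ : ∃ z, y = c :: c :: z := by
    have := take_append_drop 2 y
    rw [hy2] at this
    exact ⟨_, this.symm⟩
  obtain ⟨d, hd⟩ := hlit c
  have hda : d ≠ a := by
    rintro rfl
    have := hinvol [c]
    rw [hd, hθa] at this
    exact hbc (singleton_inj.mp this)
  have hlast : (θ y).getLast? = some d := by rw [hz, hanti.map_cons, hd, getLast?_concat]
  refine ⟨overlapFree_frame hab (hanti.length_map hlit y) (by simp [hz])
    (by simpa [hlast] using hda) (by simp [hz]) hyof, ?_⟩
  simp only [hanti.2, hinvol, hθa, hθb, hanti.map_replicate hθa, hanti.map_replicate hθb,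
    append_assoc]

theorem stmt14 (a b c : α) (hab : a ≠ b) (hbc : b ≠ c)
    (θ : List α → List α) (hlit : Literal θ) (hanti : IsAntimorphism θ)
    (hinvol : ∀ w, θ (θ w) = w) (hθa : θ [a] = [b]) (hθb : θ [b] = [a])
    (y : List α) (hylen : 3 ≤ y.length) (hy2 : y.take 2 = [c, c])
    (hyof : OverlapFree y) :
    OverlapFree (List.replicate y.length a ++ [b] ++ θ y ++ y ++ [a] ++
        List.replicate y.length b) ∧
      θ (List.replicate y.length a ++ [b] ++ θ y ++ y ++ [a] ++
          List.replicate y.length b) =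
        List.replicate y.length a ++ [b] ++ θ y ++ y ++ [a] ++
          List.replicate y.length b :=
  stmt14_general a b c hab hbc θ hlit hanti hinvol hθa hθb y hy2 hyof
end
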